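/- arXiv:2404.15818 — 8 statements merged into one kernel-verified Lean document; each statement's English description precedes it below -/
import Mathlib

section
/- For every diagram D in the Gauss-code model with c ≥ 1 crossings, the mirror image satisfies d(D*) = d(−D) and d(−D*) = d(D); consequently min{d(D), d(−D), d(D*), d(−D*)} = min{d(D), d(−D)} = d̄(D). (This is Proposition 3.1: for an alternating diagram D, the warping degree of the underlying projection, defined as the minimum warping degree over the four oriented alternating diagrams D, −D, D*, −D* with that projection, equals the unoriented warping degree d̄(D).) -/
/-- Gauss-code model of an oriented knot diagram with `c` crossings: `g` assigns to each
position on the circle `ZMod (2*c)` a crossing, every crossing is visited exactly twice,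
and `o` (overpass information) is `true` at exactly one of the two visits. -/
def IsGaussDiagram (c : ℕ) [NeZero c] (g : ZMod (2 * c) → Fin c)
    (o : ZMod (2 * c) → Bool) : Prop :=
  (∀ x : Fin c, (Finset.univ.filter fun t => g t = x).card = 2) ∧
  (∀ x : Fin c, (Finset.univ.filter fun t => g t = x ∧ o t = true).card = 1)

/-- The warping degree `d(D_b)` of the diagram `(g, o)` with base point `b`: the number of
crossings `x` such that `o` is `false` at the first position, in the traversal order
`b, b+1, …, b+2c-1`, that `g` maps to `x`. -/
def warpAt (c : ℕ) [NeZero c] (g : ZMod (2 * c) → Fin c) (o : ZMod (2 * c) → Bool)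
    (b : ZMod (2 * c)) : ℕ :=
  (Finset.univ.filter fun x : Fin c =>
    ∃ i : Fin (2 * c), g (b + ((i : ℕ) : ZMod (2 * c))) = x ∧
      o (b + ((i : ℕ) : ZMod (2 * c))) = false ∧
      ∀ j : Fin (2 * c), j < i → g (b + ((j : ℕ) : ZMod (2 * c))) ≠ x).card

/-- The warping degree `d(D)`: the minimum of `d(D_b)` over all base points `b`. -/
noncomputable def warp (c : ℕ) [NeZero c] (g : ZMod (2 * c) → Fin c) (o : ZMod (2 * c) → Bool) : ℕ :=
  sInf (Set.range (warpAt c g o))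

/-!
From a base point `b`, a crossing counts towards `d(D*_b)` iff its first visit is an overpass
of `D`. Reading `-D` from the base point `1 - b` traverses the same positions backwards, so a
crossing counts towards `d(-D_{1-b})` iff its last visit is an underpass of `D`. As each
crossing is visited exactly twice, once over and once under, the two conditions agree; hence
`d(D*_b) = d(-D_{1-b})` for every `b`, and `d(D*) = d(-D)`. Applied to `-D` this gives
`d(-D*) = d(D)`, and the statement about the minimum follows.
-/

open Finset

section Order

variable {ι : Type*} [LinearOrder ι] {S : Finset ι}

theorem Finset.exists_mem_forall_not_lt_iff_min' (hS : S.Nonempty) (q : ι → Prop) :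
    (∃ i ∈ S, q i ∧ ∀ j ∈ S, ¬ j < i) ↔ q (S.min' hS) := by
  refine ⟨fun ⟨i, hi, hq, hmin⟩ => ?_,
    fun hq => ⟨_, S.min'_mem hS, hq, fun j hj => not_lt.2 (S.min'_le j hj)⟩⟩
  rwa [le_antisymm (S.min'_le i hi) (not_lt.1 (hmin _ (S.min'_mem hS)))]

theorem Finset.exists_mem_forall_not_gt_iff_max' (hS : S.Nonempty) (q : ι → Prop) :
    (∃ i ∈ S, q i ∧ ∀ j ∈ S, ¬ i < j) ↔ q (S.max' hS) := by
  refine ⟨fun ⟨i, hi, hq, hmax⟩ => ?_,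
    fun hq => ⟨_, S.max'_mem hS, hq, fun j hj => not_lt.2 (S.le_max' j hj)⟩⟩
  rwa [le_antisymm (not_lt.1 (hmax _ (S.max'_mem hS))) (S.le_max' i hi)]

end Order

theorem Finset.apply_eq_true_iff_apply_eq_false_of_card_eq_two {α : Type*} [DecidableEq α]
    (S : Finset α) (u : α → Bool) (hS : S.card = 2) {a b : α} (ha : a ∈ S) (hb : b ∈ S)
    (hab : a ≠ b) (hu : (S.filter fun i => u i = true).card = 1) :
    u a = true ↔ u b = false := by
  obtain rfl : S = {a, b} := (eq_of_subset_of_card_le (by simp [insert_subset_iff, ha, hb])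
    (by rw [hS, card_pair hab])).symm
  cases ha : u a <;> cases hb : u b <;> simp_all [filter_insert, filter_singleton]

/-- `warpAt c g o b` counts the crossings `x` with `FirstUnder (g (b + ·)) (o (b + ·)) x`. -/
def FirstUnder {m : ℕ} {α : Type*} (s : Fin m → α) (u : Fin m → Bool) (x : α) : Prop :=
  ∃ i, s i = x ∧ u i = false ∧ ∀ j < i, s j ≠ x

section FirstUnder

variable {m : ℕ} {α : Type*} [DecidableEq α] (s : Fin m → α) (u : Fin m → Bool) (x : α)

theorem firstUnder_iff_exists_mem :
    FirstUnder s u x ↔ ∃ i ∈ univ.filter (s · = x), u i = false ∧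
      ∀ j ∈ univ.filter (s · = x), ¬ j < i := by
  simp only [FirstUnder, mem_filter, mem_univ, true_and]
  exact exists_congr fun i => and_congr_right fun _ => and_congr_right fun _ =>
    forall_congr' fun j => by tauto

theorem firstUnder_rev_iff_exists_mem :
    FirstUnder (s ∘ Fin.rev) (u ∘ Fin.rev) x ↔
      ∃ i ∈ univ.filter (s · = x), u i = false ∧ ∀ j ∈ univ.filter (s · = x), ¬ i < j := by
  simp only [FirstUnder, mem_filter, mem_univ, true_and, Function.comp]
  rw [← Fin.revPerm.exists_congr_right]
  simp only [Fin.revPerm_apply, Fin.rev_rev]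
  refine exists_congr fun i => and_congr_right fun _ => and_congr_right fun _ => ?_
  rw [← Fin.revPerm.forall_congr_right]
  simp only [Fin.revPerm_apply, Fin.rev_rev, Fin.rev_lt_rev]
  exact forall_congr' fun j => by tauto

theorem firstUnder_not_iff_firstUnder_rev
    (hcard : (univ.filter (s · = x)).card = 2)
    (hover : (univ.filter fun i => s i = x ∧ u i = true).card = 1) :
    FirstUnder s (fun i => !u i) x ↔ FirstUnder (s ∘ Fin.rev) (u ∘ Fin.rev) x := by
  set S := univ.filter (s · = x)
  have hne : S.Nonempty := card_pos.1 (by omega)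
  rw [firstUnder_iff_exists_mem, firstUnder_rev_iff_exists_mem,
    S.exists_mem_forall_not_lt_iff_min' hne, S.exists_mem_forall_not_gt_iff_max' hne,
    Bool.not_eq_false']
  refine S.apply_eq_true_iff_apply_eq_false_of_card_eq_two u hcard (S.min'_mem hne)
    (S.max'_mem hne) (S.min'_lt_max'_of_card (by omega)).ne ?_
  rwa [filter_filter]

end FirstUnder

theorem Fin.natCast_rev {n : ℕ} (i : Fin n) : ((i.rev : ℕ) : ZMod n) = -1 - (i : ℕ) := by
  rw [Fin.val_rev, Nat.cast_sub (by omega), Nat.cast_add, ZMod.natCast_self]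
  ring

theorem card_filter_add_natCast {n : ℕ} [NeZero n] (b : ZMod n) (p : ZMod n → Prop)
    [DecidablePred p] :
    (univ.filter fun i : Fin n => p (b + (i : ℕ))).card = (univ.filter p).card := by
  refine card_nbij' (fun i => b + (i : ℕ)) (fun t => ⟨(t - b).val, ZMod.val_lt _⟩) ?_ ?_ ?_ ?_
  · intro i; simp
  · intro t; simp
  · intro i _; ext; simp [ZMod.val_natCast, Nat.mod_eq_of_lt i.isLt]
  · intro t _; simp

section Diagram

variable (c : ℕ) [NeZero c] (g : ZMod (2 * c) → Fin c) (o : ZMod (2 * c) → Bool)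

theorem IsGaussDiagram.reverse (hD : IsGaussDiagram c g o) :
    IsGaussDiagram c (fun t => g (-t)) (fun t => o (-t)) :=
  ⟨fun x => (card_equiv (Equiv.neg _) (by simp)).trans (hD.1 x),
    fun x => (card_equiv (Equiv.neg _) (by simp)).trans (hD.2 x)⟩

theorem warpAt_mirror (hD : IsGaussDiagram c g o) (b : ZMod (2 * c)) :
    warpAt c g (fun t => !o t) b = warpAt c (fun t => g (-t)) (fun t => o (-t)) (1 - b) := by
  -- reading `-D` from `1 - b` is reading `D` from `b` backwards
  have hpos (i : Fin (2 * c)) : -(1 - b + (i : ℕ)) = b + ((i.rev : ℕ) : ZMod (2 * c)) := by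
    rw [Fin.natCast_rev]; ring
  simp only [warpAt, hpos]
  exact congrArg card <| filter_congr fun x _ =>
    firstUnder_not_iff_firstUnder_rev (fun i : Fin (2 * c) => g (b + (i : ℕ)))
      (fun i => o (b + (i : ℕ))) x
      ((card_filter_add_natCast b (g · = x)).trans (hD.1 x))
      ((card_filter_add_natCast b (fun t => g t = x ∧ o t = true)).trans (hD.2 x))

theorem warp_mirror (hD : IsGaussDiagram c g o) :
    warp c g (fun t => !o t) = warp c (fun t => g (-t)) (fun t => o (-t)) := by
  have h : warpAt c g (fun t => !o t) =
      warpAt c (fun t => g (-t)) (fun t => o (-t)) ∘ Equiv.subLeft 1 :=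
    funext (warpAt_mirror c g o hD)
  rw [warp, warp, h, EquivLike.range_comp]

end Diagram

theorem mirror_warp_eq_reverse_warp_general (c : ℕ) [NeZero c]
    (g : ZMod (2 * c) → Fin c) (o : ZMod (2 * c) → Bool) (hD : IsGaussDiagram c g o) :
    warp c g (fun t => !(o t)) = warp c (fun t => g (-t)) (fun t => o (-t)) ∧
    warp c (fun t => g (-t)) (fun t => !(o (-t))) = warp c g o ∧
    min (min (warp c g o) (warp c (fun t => g (-t)) (fun t => o (-t))))
        (min (warp c g (fun t => !(o t))) (warp c (fun t => g (-t)) (fun t => !(o (-t)))))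
      = min (warp c g o) (warp c (fun t => g (-t)) (fun t => o (-t))) := by
  have hmirror := warp_mirror c g o hD
  have hmirror_reverse : warp c (fun t => g (-t)) (fun t => !(o (-t))) = warp c g o := by
    simpa only [neg_neg] using warp_mirror c _ _ hD.reverse
  refine ⟨hmirror, hmirror_reverse, ?_⟩
  rw [hmirror, hmirror_reverse, min_comm (warp c _ _) (warp c g o), min_self]

/-- Proposition 3.1: for a diagram `D = (g, o)` with `c ≥ 1` crossings, the mirror image
`D* = (g, !o)` satisfies `d(D*) = d(-D)` and `d(-D*) = d(D)`; consequently the minimum of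
the warping degrees of the four diagrams `D`, `-D`, `D*`, `-D*` equals
`min {d(D), d(-D)} = d̄(D)`, the unoriented warping degree. -/
theorem mirror_warp_eq_reverse_warp (c : ℕ) [NeZero c] (hc : 1 ≤ c)
    (g : ZMod (2 * c) → Fin c) (o : ZMod (2 * c) → Bool) (hD : IsGaussDiagram c g o) :
    warp c g (fun t => !(o t)) = warp c (fun t => g (-t)) (fun t => o (-t)) ∧
    warp c (fun t => g (-t)) (fun t => !(o (-t))) = warp c g o ∧
    min (min (warp c g o) (warp c (fun t => g (-t)) (fun t => o (-t))))
        (min (warp c g (fun t => !(o t))) (warp c (fun t => g (-t)) (fun t => !(o (-t)))))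
      = min (warp c g o) (warp c (fun t => g (-t)) (fun t => o (-t))) :=
  mirror_warp_eq_reverse_warp_general c g o hD
end

section
/- For every diagram D in the Gauss-code model with c ≥ 1 crossings, d(−D) = c − max over all base points b of d(D_b); hence the unoriented warping degree satisfies d̄(D) = min{ min_b d(D_b), c − max_b d(D_b) }. -/
open Finset

def IsFirstVisitUnder {ι β : Type*} [LT ι] (G : ι → β) (O : ι → Bool) (x : β) : Prop :=
  ∃ i, G i = x ∧ O i = false ∧ ∀ j, j < i → G j ≠ x

theorem isFirstVisitUnder_iff_of_fiber {ι β : Type*} [Preorder ι] {G : ι → β} (O : ι → Bool)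
    {x : β} {i₁ i₂ : ι} (hlt : i₁ < i₂) (hfib : ∀ i, G i = x ↔ i = i₁ ∨ i = i₂) :
    IsFirstVisitUnder G O x ↔ O i₁ = false := by
  constructor
  · rintro ⟨i, hGi, hOi, hfirst⟩
    rcases (hfib i).1 hGi with rfl | rfl
    · exact hOi
    · exact absurd ((hfib i₁).2 (Or.inl rfl)) (hfirst i₁ hlt)
  · refine fun hO => ⟨i₁, (hfib i₁).2 (Or.inl rfl), hO, fun j hj hGj => ?_⟩
    rcases (hfib j).1 hGj with rfl | rfl
    · exact lt_irrefl _ hj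
    · exact lt_asymm hlt hj

theorem isFirstVisitUnder_comp_rev_iff {n : ℕ} {β : Type*} [DecidableEq β] {G : Fin n → β}
    {O : Fin n → Bool} {x : β} (htwo : #{i | G i = x} = 2)
    (hone : #{i | G i = x ∧ O i = true} = 1) :
    IsFirstVisitUnder (G ∘ Fin.rev) (O ∘ Fin.rev) x ↔ ¬ IsFirstVisitUnder G O x := by
  obtain ⟨i₁, i₂, hlt, hfib⟩ : ∃ i₁ i₂, i₁ < i₂ ∧ ∀ i, G i = x ↔ i = i₁ ∨ i = i₂ := by
    obtain ⟨a, b, hab, hfiber⟩ := card_eq_two.mp htwo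
    have hfib : ∀ i, G i = x ↔ i = a ∨ i = b := fun i => by simpa using Finset.ext_iff.mp hfiber i
    rcases hab.lt_or_gt with h | h
    · exact ⟨a, b, h, hfib⟩
    · exact ⟨b, a, h, fun i => (hfib i).trans or_comm⟩
  have hO : O i₁ = !O i₂ := by
    have hfilter : ({i | G i = x ∧ O i = true} : Finset (Fin n))
        = ({i₁, i₂} : Finset (Fin n)).filter (O · = true) := by
      ext i
      simp only [mem_filter, mem_univ, true_and, hfib, mem_insert, mem_singleton]
    rw [hfilter] at hone
    cases h₁ : O i₁ <;> cases h₂ : O i₂ <;> simp_all [filter_insert, filter_singleton, hlt.ne]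
  have hfib_rev : ∀ i, (G ∘ Fin.rev) i = x ↔ i = i₂.rev ∨ i = i₁.rev := fun i => by
    rw [Function.comp_apply, hfib, Fin.rev_eq_iff, Fin.rev_eq_iff, or_comm]
  rw [isFirstVisitUnder_iff_of_fiber O hlt hfib,
    isFirstVisitUnder_iff_of_fiber (O ∘ Fin.rev) (Fin.rev_lt_rev.2 hlt) hfib_rev]
  simp [hO]

theorem bijective_add_natCast_fin {n : ℕ} [NeZero n] (b : ZMod n) :
    Function.Bijective fun i : Fin n => b + ((i : ℕ) : ZMod n) := by
  refine (Fintype.bijective_iff_injective_and_card _).2 ⟨fun i j h => ?_, by simp⟩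
  have h' := congrArg ZMod.val (add_left_cancel h)
  rw [ZMod.val_natCast_of_lt i.isLt, ZMod.val_natCast_of_lt j.isLt] at h'
  exact Fin.ext h'

theorem neg_sub_add_natCast_eq_add_natCast_rev {n : ℕ} (b : ZMod n) (i : Fin n) :
    -((1 - b) + ((i : ℕ) : ZMod n)) = b + ((i.rev : ℕ) : ZMod n) := by
  have hi : (i : ℕ) + 1 ≤ n := i.isLt
  rw [Fin.val_rev, Nat.cast_sub hi, ZMod.natCast_self]
  push_cast
  ring

theorem card_filter_comp_of_bijective {α β : Type*} [Fintype α] [Fintype β] {e : α → β}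
    (he : e.Bijective) (p : β → Prop) [DecidablePred p] :
    #{a | p (e a)} = #{b | p b} := by
  simp only [← Fintype.card_subtype]
  exact Fintype.card_congr ((Equiv.ofBijective e he).subtypeEquiv fun _ => Iff.rfl)

open Classical in
theorem warpAt_eq_card_isFirstVisitUnder (c : ℕ) [NeZero c] (g : ZMod (2 * c) → Fin c)
    (o : ZMod (2 * c) → Bool) (b : ZMod (2 * c)) :
    warpAt c g o b = #{x | IsFirstVisitUnder (fun i : Fin (2 * c) => g (b + ((i : ℕ) : ZMod _)))
      (fun i => o (b + ((i : ℕ) : ZMod _))) x} := by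
  unfold warpAt IsFirstVisitUnder
  congr

theorem warpAt_reverse_add_warpAt {c : ℕ} [NeZero c] {g : ZMod (2 * c) → Fin c}
    {o : ZMod (2 * c) → Bool} (hD : IsGaussDiagram c g o) (b : ZMod (2 * c)) :
    warpAt c (fun t => g (-t)) (fun t => o (-t)) (1 - b) + warpAt c g o b = c := by
  have hbij := bijective_add_natCast_fin b
  have key : ∀ x, IsFirstVisitUnder (fun i : Fin (2 * c) => g (-((1 - b) + ((i : ℕ) : ZMod _))))
      (fun i => o (-((1 - b) + ((i : ℕ) : ZMod _)))) x ↔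
      ¬ IsFirstVisitUnder (fun i : Fin (2 * c) => g (b + ((i : ℕ) : ZMod _)))
        (fun i => o (b + ((i : ℕ) : ZMod _))) x := fun x => by
    simp only [neg_sub_add_natCast_eq_add_natCast_rev]
    exact isFirstVisitUnder_comp_rev_iff
      ((card_filter_comp_of_bijective hbij (g · = x)).trans (hD.1 x))
      ((card_filter_comp_of_bijective hbij (fun t => g t = x ∧ o t = true)).trans (hD.2 x))
  classical
  rw [warpAt_eq_card_isFirstVisitUnder, warpAt_eq_card_isFirstVisitUnder,
    filter_congr (fun x _ => key x), add_comm, card_filter_add_card_filter_not, card_univ,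
    Fintype.card_fin]

theorem warp_reverse_eq_crossing_sub_sup_general (c : ℕ) [NeZero c]
    (g : ZMod (2 * c) → Fin c) (o : ZMod (2 * c) → Bool) (hD : IsGaussDiagram c g o) :
    warp c (fun t => g (-t)) (fun t => o (-t)) = c - sSup (Set.range (warpAt c g o)) ∧
    min (warp c g o) (warp c (fun t => g (-t)) (fun t => o (-t)))
      = min (sInf (Set.range (warpAt c g o))) (c - sSup (Set.range (warpAt c g o))) := by
  have hreverse : warpAt c (fun t => g (-t)) (fun t => o (-t))
      = ((c - ·) ∘ warpAt c g o) ∘ Equiv.subLeft 1 := by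
    funext b
    have hsum := warpAt_reverse_add_warpAt hD (1 - b)
    rw [sub_sub_cancel] at hsum
    simp only [Function.comp_apply, Equiv.subLeft_apply]
    omega
  have hwarp : warp c (fun t => g (-t)) (fun t => o (-t)) = c - sSup (Set.range (warpAt c g o)) := by
    rw [warp, hreverse, (Equiv.subLeft _).surjective.range_comp, Set.range_comp]
    exact (Antitone.map_csSup_of_continuousAt continuous_of_discreteTopology.continuousAt
      (fun _ _ h => Nat.sub_le_sub_left h c) (Set.range_nonempty _)
      (Set.finite_range _).bddAbove).symm
  exact ⟨hwarp, by rw [hwarp]; rfl⟩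

/-- For every diagram `D = (g, o)` with `c ≥ 1` crossings,
`d(-D) = c - max_b d(D_b)`; hence the unoriented warping degree
`d̄(D) = min {d(D), d(-D)}` equals `min { min_b d(D_b), c - max_b d(D_b) }`. -/
theorem warp_reverse_eq_crossing_sub_sup (c : ℕ) [NeZero c] (hc : 1 ≤ c)
    (g : ZMod (2 * c) → Fin c) (o : ZMod (2 * c) → Bool) (hD : IsGaussDiagram c g o) :
    warp c (fun t => g (-t)) (fun t => o (-t)) = c - sSup (Set.range (warpAt c g o)) ∧
    min (warp c g o) (warp c (fun t => g (-t)) (fun t => o (-t)))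
      = min (sInf (Set.range (warpAt c g o))) (c - sSup (Set.range (warpAt c g o))) :=
  warp_reverse_eq_crossing_sub_sup_general c g o hD
end

section
/- (Lemma 3.5) Every diagram D in the Gauss-code model with c ≥ 1 crossings satisfies d̄(D) ≤ (c − 1)/2, i.e., 2·d̄(D) ≤ c − 1. -/
/-!
Take the base point `b` at an overpass. Walking forward from `b` computes `d(D_b)`; walking
backward from `b` computes `d((-D)_{-b})`. Both walks meet the crossing at `b` first at its
overpass, so it counts in neither. Every other crossing has both visits away from `b`, and the
two walks meet them in opposite orders, so exactly one walk meets its underpass first. Hence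
`d(D_b) + d((-D)_{-b}) = c - 1`, and the smaller term is at most `(c - 1) / 2`.
-/

open Finset

section FirstVisit

variable {ι α β : Type*} [Preorder ι]

def FirstVisitUnder (e : ι ≃ α) (g : α → β) (o : α → Bool) (x : β) : Prop :=
  ∃ i, g (e i) = x ∧ o (e i) = false ∧ ∀ j, j < i → g (e j) ≠ x

theorem firstVisitUnder_iff {e : ι ≃ α} {g : α → β} {o : α → Bool} {x : β} {p q : α}
    (hx : ∀ t, g t = x ↔ t = p ∨ t = q) (hpq : e.symm p < e.symm q) :
    FirstVisitUnder e g o x ↔ o p = false := by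
  constructor
  · rintro ⟨i, hgi, hoi, hfirst⟩
    rcases (hx _).1 hgi with h | h
    · rwa [h] at hoi
    · have hi : i = e.symm q := by rw [← h, Equiv.symm_apply_apply]
      refine (hfirst _ (hi ▸ hpq) ?_).elim
      rw [Equiv.apply_symm_apply]
      exact (hx p).2 (.inl rfl)
  · intro hop
    refine ⟨e.symm p, by simp [hx], by simpa using hop, fun j hj hgj => ?_⟩
    rcases (hx _).1 hgj with h | h
    · exact hj.ne (by rw [← h, Equiv.symm_apply_apply])
    · exact lt_asymm hpq (by rwa [← h, Equiv.symm_apply_apply])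

end FirstVisit

section Walks

variable {n : ℕ} [NeZero n]

def forwardWalk (b : ZMod n) : Fin n ≃ ZMod n where
  toFun i := b + (i : ℕ)
  invFun t := ⟨(t - b).val, ZMod.val_lt _⟩
  left_inv i := Fin.ext <| by simp [ZMod.val_natCast_of_lt i.isLt]
  right_inv t := by simp

/-- The walk `b, b - 1, …, b - (n - 1)`: the traversal of the reversed diagram from base point
`-b`, written in the positions of the original diagram. -/
def backwardWalk (b : ZMod n) : Fin n ≃ ZMod n :=
  (forwardWalk (-b)).trans (Equiv.neg _)

theorem forwardWalk_symm_val (b t : ZMod n) : ((forwardWalk b).symm t : ℕ) = (t - b).val := rfl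

theorem backwardWalk_symm_val (b t : ZMod n) :
    ((backwardWalk b).symm t : ℕ) = (-(t - b)).val := by
  simp only [backwardWalk, Equiv.symm_trans_apply, Equiv.neg_symm, Equiv.neg_apply,
    forwardWalk_symm_val]
  ring_nf

theorem ZMod.val_neg_lt_val_neg {u v : ZMod n} (hu : u ≠ 0) (hv : v ≠ 0) (h : u.val < v.val) :
    (-v).val < (-u).val := by
  simp only [ZMod.neg_val, hu, hv, if_false]
  have := ZMod.val_lt v
  omega

variable {b p q : ZMod n}

theorem forwardWalk_symm_self_lt (hp : p ≠ b) :
    (forwardWalk b).symm b < (forwardWalk b).symm p := by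
  simp [Fin.lt_def, forwardWalk_symm_val, ZMod.val_pos, sub_ne_zero.2 hp]

theorem backwardWalk_symm_self_lt (hp : p ≠ b) :
    (backwardWalk b).symm b < (backwardWalk b).symm p := by
  simp [Fin.lt_def, backwardWalk_symm_val, ZMod.val_pos, sub_ne_zero.2 hp.symm]

theorem backwardWalk_symm_lt_of_forwardWalk_symm_lt (hp : p ≠ b) (hq : q ≠ b)
    (h : (forwardWalk b).symm p < (forwardWalk b).symm q) :
    (backwardWalk b).symm q < (backwardWalk b).symm p := by
  rw [Fin.lt_def, forwardWalk_symm_val, forwardWalk_symm_val] at h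
  rw [Fin.lt_def, backwardWalk_symm_val, backwardWalk_symm_val]
  exact ZMod.val_neg_lt_val_neg (sub_ne_zero.2 hp) (sub_ne_zero.2 hq) h

end Walks

theorem card_filter_add_card_filter_eq_card_sub_one {β : Type*} [Fintype β] [DecidableEq β]
    {P Q : β → Prop} [DecidablePred P] [DecidablePred Q] {a : β} (hPa : ¬P a) (hQa : ¬Q a)
    (hPQ : ∀ x, x ≠ a → (P x ↔ ¬Q x)) :
    #{x | P x} + #{x | Q x} = Fintype.card β - 1 := by
  have hunion : univ.filter P ∪ univ.filter Q = univ.erase a := by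
    ext x
    by_cases hx : x = a
    · simp [hx, hPa, hQa]
    · simp [hx, hPQ x hx, em']
  have hinter : univ.filter P ∩ univ.filter Q = ∅ := by
    ext x
    by_cases hx : x = a
    · simp [hx, hPa]
    · simp [hPQ x hx]
  rw [← card_union_add_card_inter, hunion, hinter, card_erase_of_mem (mem_univ a), card_univ,
    card_empty, add_zero]

section GaussDiagram

variable {c : ℕ} [NeZero c] {g : ZMod (2 * c) → Fin c} {o : ZMod (2 * c) → Bool}
  {b : ZMod (2 * c)}

theorem warpAt_eq_card_firstVisitUnder [DecidablePred (FirstVisitUnder (forwardWalk b) g o)] :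
    warpAt c g o b = #{x | FirstVisitUnder (forwardWalk b) g o x} := by
  unfold warpAt
  congr

theorem warpAt_reverse_eq_card_firstVisitUnder
    [DecidablePred (FirstVisitUnder (backwardWalk b) g o)] :
    warpAt c (fun t => g (-t)) (fun t => o (-t)) (-b) =
      #{x | FirstVisitUnder (backwardWalk b) g o x} := by
  unfold warpAt
  congr

theorem IsGaussDiagram.exists_visits (hD : IsGaussDiagram c g o) (x : Fin c) :
    ∃ p q, p ≠ q ∧ (∀ t, g t = x ↔ t = p ∨ t = q) ∧ o p = !o q := by
  obtain ⟨p, q, hpq, hvisits⟩ := card_eq_two.1 (hD.1 x)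
  have hx : ∀ t, g t = x ↔ t = p ∨ t = q := fun t => by
    simpa using Finset.ext_iff.1 hvisits t
  have hover := hD.2 x
  have : ({t | g t = x ∧ o t = true} : Finset _) = ({p, q} : Finset _).filter (o · = true) := by
    ext t; simp [hx]
  rw [this] at hover
  refine ⟨p, q, hpq, hx, ?_⟩
  cases hp : o p <;> cases hq : o q <;>
    simp [filter_insert, filter_singleton, hp, hq, hpq] at hover ⊢

theorem IsGaussDiagram.exists_overpass (hD : IsGaussDiagram c g o) : ∃ b, o b = true := by
  obtain ⟨b, hb⟩ := card_pos.1 (hD.2 0 ▸ Nat.one_pos)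
  exact ⟨b, (mem_filter.1 hb).2.2⟩

theorem IsGaussDiagram.exists_other_visit (hD : IsGaussDiagram c g o) (b : ZMod (2 * c)) :
    ∃ r, r ≠ b ∧ ∀ t, g t = g b ↔ t = b ∨ t = r := by
  obtain ⟨p, q, hpq, hx, -⟩ := hD.exists_visits (g b)
  rcases (hx b).1 rfl with rfl | rfl
  · exact ⟨q, hpq.symm, hx⟩
  · exact ⟨p, hpq, fun t => (hx t).trans or_comm⟩

theorem IsGaussDiagram.not_firstVisitUnder_base (hD : IsGaussDiagram c g o) (hb : o b = true) :
    ¬FirstVisitUnder (forwardWalk b) g o (g b) ∧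
      ¬FirstVisitUnder (backwardWalk b) g o (g b) := by
  obtain ⟨r, hrb, hr⟩ := hD.exists_other_visit b
  rw [firstVisitUnder_iff hr (forwardWalk_symm_self_lt hrb),
    firstVisitUnder_iff hr (backwardWalk_symm_self_lt hrb), hb]
  simp

theorem IsGaussDiagram.firstVisitUnder_forwardWalk_iff_not_backwardWalk
    (hD : IsGaussDiagram c g o) {x : Fin c} (hx : x ≠ g b) :
    FirstVisitUnder (forwardWalk b) g o x ↔ ¬FirstVisitUnder (backwardWalk b) g o x := by
  obtain ⟨p, q, hpq, hvis, hop⟩ := hD.exists_visits x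
  have hvis' : ∀ t, g t = x ↔ t = q ∨ t = p := fun t => (hvis t).trans or_comm
  have hp : p ≠ b := by rintro rfl; exact hx ((hvis p).2 (.inl rfl)).symm
  have hq : q ≠ b := by rintro rfl; exact hx ((hvis q).2 (.inr rfl)).symm
  rcases ((forwardWalk b).symm.injective.ne hpq).lt_or_gt with h | h
  · rw [firstVisitUnder_iff hvis h,
      firstVisitUnder_iff hvis' (backwardWalk_symm_lt_of_forwardWalk_symm_lt hp hq h), hop]
    cases o q <;> simp
  · rw [firstVisitUnder_iff hvis' h,
      firstVisitUnder_iff hvis (backwardWalk_symm_lt_of_forwardWalk_symm_lt hq hp h), hop]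
    cases o q <;> simp

theorem IsGaussDiagram.warpAt_add_warpAt_reverse (hD : IsGaussDiagram c g o) (hb : o b = true) :
    warpAt c g o b + warpAt c (fun t => g (-t)) (fun t => o (-t)) (-b) = c - 1 := by
  classical
  rw [warpAt_eq_card_firstVisitUnder, warpAt_reverse_eq_card_firstVisitUnder,
    card_filter_add_card_filter_eq_card_sub_one (hD.not_firstVisitUnder_base hb).1
      (hD.not_firstVisitUnder_base hb).2
      fun _ hx => hD.firstVisitUnder_forwardWalk_iff_not_backwardWalk hx,
    Fintype.card_fin]

end GaussDiagram

theorem warp_le_warpAt (c : ℕ) [NeZero c] (g : ZMod (2 * c) → Fin c) (o : ZMod (2 * c) → Bool)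
    (b : ZMod (2 * c)) : warp c g o ≤ warpAt c g o b :=
  Nat.sInf_le ⟨b, rfl⟩

theorem two_mul_unoriented_warp_le_general (c : ℕ) [NeZero c]
    (g : ZMod (2 * c) → Fin c) (o : ZMod (2 * c) → Bool) (hD : IsGaussDiagram c g o) :
    2 * min (warp c g o) (warp c (fun t => g (-t)) (fun t => o (-t))) ≤ c - 1 := by
  obtain ⟨b, hb⟩ := hD.exists_overpass
  have hsum := hD.warpAt_add_warpAt_reverse hb
  have h₁ := warp_le_warpAt c g o b
  have h₂ := warp_le_warpAt c (fun t => g (-t)) (fun t => o (-t)) (-b)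
  omega

/-- Lemma 3.5: every diagram `D` with `c ≥ 1` crossings satisfies
`d̄(D) ≤ (c - 1)/2`, i.e. `2 * d̄(D) ≤ c - 1`. -/
theorem two_mul_unoriented_warp_le (c : ℕ) [NeZero c] (hc : 1 ≤ c)
    (g : ZMod (2 * c) → Fin c) (o : ZMod (2 * c) → Bool) (hD : IsGaussDiagram c g o) :
    2 * min (warp c g o) (warp c (fun t => g (-t)) (fun t => o (-t))) ≤ c - 1 :=
  two_mul_unoriented_warp_le_general c g o hD
end

section
/- (Proposition 3.2) Let D = (g, o) be an alternating diagram in the Gauss-code model with c ≥ 2 crossings, and let D' be the almost alternating diagram obtained from D by a crossing change at a single crossing x, i.e., by negating o at the two preimages of x under g. Then d̄(D') ≤ d̄(D). If moreover the diagram has no monogons, i.e., g(t+1) ≠ g(t) for every t ∈ ZMod (2c), then d̄(D') = d̄(D) − 1. -/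
/-!
Record each crossing `x` by the positions `ov x` and `un x` of its over- and under-passage.
Seen from the base point `b`, `x` is a warping crossing exactly when `un x` comes before `ov x`.
Moving the base point one step past an over-passage adds one warping crossing, and moving it
past an under-passage removes one. So on an alternating diagram `d(D_b)` is `d(D)` at
over-passages and `d(D) + 1` at under-passages. A crossing change at `x` toggles only whether `x`
is counted, so it changes each `d(D_b)` by `±1`. From `b = un x` this gives the value `d(D)`.
If there are no monogons, then starting at the over-passage just before `un x` gives
`d(D) - 1`, and this is the minimum. Reversal preserves every hypothesis, which gives the
unoriented statement.
-/

namespace ZMod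

variable {n : ℕ} [NeZero n]

lemma val_sub_add_one_add_one {t b : ZMod n} (h : t ≠ b) :
    (t - (b + 1)).val + 1 = (t - b).val := by
  have hn : n ≠ 1 := by rintro rfl; exact h (Subsingleton.elim _ _)
  have hpos : 0 < (t - b).val := ZMod.val_pos.mpr (sub_ne_zero.mpr h)
  rw [show t - (b + 1) = t - b - 1 by ring, ZMod.val_sub (by rw [ZMod.val_one'' hn]; omega),
    ZMod.val_one'' hn]
  omega

lemma val_sub_add_one_lt_val_self_sub_add_one {t b : ZMod n} (h : t ≠ b) :
    (t - (b + 1)).val < (b - (b + 1)).val := by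
  have hn : n ≠ 1 := by rintro rfl; exact h (Subsingleton.elim _ _)
  have : NeZero (1 : ZMod n) := ⟨fun h1 => by simpa [h1] using ZMod.val_one'' hn⟩
  rw [show b - (b + 1) = -1 by ring, ZMod.val_neg_of_ne_zero, ZMod.val_one'' hn]
  have := val_sub_add_one_add_one h
  have := (t - b).val_lt
  omega

lemma val_sub_ne_val_sub {a a' : ZMod n} (b : ZMod n) (h : a ≠ a') :
    (a - b).val ≠ (a' - b).val := fun hv =>
  h (sub_left_inj.mp (ZMod.val_injective n hv))

lemma add_natCast_eq_iff {b p : ZMod n} {i : ℕ} (hi : i < n) : b + i = p ↔ i = (p - b).val := by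
  rw [← eq_sub_iff_add_eq']
  constructor
  · rintro h; rw [← h, ZMod.val_natCast_of_lt hi]
  · rintro rfl; exact ZMod.natCast_zmod_val _

lemma apply_eq_of_periodic_one {α : Type*} {f : ZMod n → α} (hf : Function.Periodic f 1)
    (a b : ZMod n) : f a = f b := by
  have key : ∀ a, f a = f 0 := fun a => by
    simpa [ZMod.natCast_zmod_val] using hf.nat_mul a.val 0
  rw [key a, key b]

end ZMod

lemma ne_comp_neg_of_forall_add_ne {G α : Type*} [AddCommGroup G] {f : G → α} {a : G}
    (hf : ∀ t, f (t + a) ≠ f t) (t : G) : f (-(t + a)) ≠ f (-t) := by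
  have := hf (-(t + a))
  rw [show -(t + a) + a = -t by abel] at this
  exact this.symm

def crossingChange {n : ℕ} {ι : Type*} [DecidableEq ι] (g : ZMod n → ι) (o : ZMod n → Bool)
    (x : ι) : ZMod n → Bool :=
  fun t => if g t = x then !o t else o t

structure IsOverUnderPositions {n : ℕ} {ι : Type*} (g : ZMod n → ι) (o : ZMod n → Bool)
    (ov un : ι → ZMod n) : Prop where
  apply_eq_iff : ∀ t x, g t = x ↔ t = ov x ∨ t = un x
  over_true : ∀ x, o (ov x) = true
  under_false : ∀ x, o (un x) = false

def underFirst {n : ℕ} {ι : Type*} [Fintype ι] (ov un : ι → ZMod n) (b : ZMod n) : Finset ι :=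
  {x | (un x - b).val < (ov x - b).val}

namespace IsOverUnderPositions

variable {n : ℕ} {ι : Type*} {g : ZMod n → ι} {o : ZMod n → Bool} {ov un : ι → ZMod n}

lemma apply_ov (hp : IsOverUnderPositions g o ov un) (x : ι) : g (ov x) = x :=
  (hp.apply_eq_iff _ _).2 (Or.inl rfl)

lemma apply_un (hp : IsOverUnderPositions g o ov un) (x : ι) : g (un x) = x :=
  (hp.apply_eq_iff _ _).2 (Or.inr rfl)

lemma ov_ne_un (hp : IsOverUnderPositions g o ov un) (x : ι) : ov x ≠ un x := fun h => by
  simpa [h, hp.under_false x] using hp.over_true x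

lemma eq_ov_of_eq_true (hp : IsOverUnderPositions g o ov un) {t : ZMod n} (ht : o t = true) :
    t = ov (g t) :=
  ((hp.apply_eq_iff t (g t)).1 rfl).resolve_right fun h => by
    rw [h, hp.under_false] at ht; exact Bool.false_ne_true ht

lemma ov_ne_and_un_ne_of_apply_ne (hp : IsOverUnderPositions g o ov un) {t : ZMod n} {x : ι}
    (hx : g t ≠ x) : ov x ≠ t ∧ un x ≠ t :=
  ⟨fun h => hx (h ▸ hp.apply_ov x), fun h => hx (h ▸ hp.apply_un x)⟩

lemma mirror (hp : IsOverUnderPositions g o ov un) :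
    IsOverUnderPositions g (fun t => !o t) un ov :=
  ⟨fun t x => (hp.apply_eq_iff t x).trans or_comm, fun x => by simp [hp.under_false],
    fun x => by simp [hp.over_true]⟩

lemma reverse (hp : IsOverUnderPositions g o ov un) :
    IsOverUnderPositions (fun t => g (-t)) (fun t => o (-t)) (fun x => -ov x) (fun x => -un x) :=
  ⟨fun t x => by rw [hp.apply_eq_iff, neg_eq_iff_eq_neg, neg_eq_iff_eq_neg],
    fun x => by simp [hp.over_true], fun x => by simp [hp.under_false]⟩

lemma crossingChange_update [DecidableEq ι] (hp : IsOverUnderPositions g o ov un) (x : ι) :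
    IsOverUnderPositions g (crossingChange g o x) (Function.update ov x (un x))
      (Function.update un x (ov x)) := by
  refine ⟨fun t y => ?_, fun y => ?_, fun y => ?_⟩
  · rw [hp.apply_eq_iff]
    rcases eq_or_ne y x with rfl | hy
    · simp only [Function.update_self]; exact or_comm
    · simp only [Function.update_of_ne hy]
  · rcases eq_or_ne y x with rfl | hy
    · simp [crossingChange, hp.apply_un, hp.under_false]
    · simp [crossingChange, hy, hp.apply_ov, hp.over_true]
  · rcases eq_or_ne y x with rfl | hy
    · simp [crossingChange, hp.apply_ov, hp.over_true]
    · simp [crossingChange, hy, hp.apply_un, hp.under_false]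

end IsOverUnderPositions

section underFirst

open Finset

variable {n : ℕ} {ι : Type*} [Fintype ι] {ov un : ι → ZMod n} {b : ZMod n} {x : ι}

lemma mem_underFirst : x ∈ underFirst ov un b ↔ (un x - b).val < (ov x - b).val := by
  simp [underFirst]

lemma mem_underFirst_update_swap_of_ne [DecidableEq ι] {z : ι} (hz : z ≠ x) :
    z ∈ underFirst (Function.update ov x (un x)) (Function.update un x (ov x)) b ↔
      z ∈ underFirst ov un b := by
  simp only [mem_underFirst, Function.update_of_ne hz]

lemma underFirst_subset_update_swap_of_notMem [DecidableEq ι] (hmem : x ∉ underFirst ov un b) :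
    underFirst ov un b ⊆
      underFirst (Function.update ov x (un x)) (Function.update un x (ov x)) b := by
  intro z hz
  rw [mem_underFirst_update_swap_of_ne (ne_of_mem_of_not_mem hz hmem)]
  exact hz

lemma mem_underFirst_un (h : ov x ≠ un x) : x ∈ underFirst ov un (un x) := by
  simp [mem_underFirst, ZMod.val_pos, sub_ne_zero, h]

variable [NeZero n]

lemma mem_underFirst_add_one_iff (hov : ov x ≠ b) (hun : un x ≠ b) :
    x ∈ underFirst ov un (b + 1) ↔ x ∈ underFirst ov un b := by
  have := ZMod.val_sub_add_one_add_one hov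
  have := ZMod.val_sub_add_one_add_one hun
  simp only [mem_underFirst]
  omega

variable [DecidableEq ι]

lemma underFirst_comm (hne : ∀ x, ov x ≠ un x) (b : ZMod n) :
    underFirst un ov b = (underFirst ov un b)ᶜ := by
  ext x
  have := ZMod.val_sub_ne_val_sub b (hne x).symm
  simp only [mem_compl, mem_underFirst]
  omega

lemma mem_underFirst_update_swap_self (hx : ov x ≠ un x) :
    x ∈ underFirst (Function.update ov x (un x)) (Function.update un x (ov x)) b ↔
      x ∉ underFirst ov un b := by
  have := ZMod.val_sub_ne_val_sub b hx.symm
  simp only [mem_underFirst, Function.update_self]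
  omega

lemma underFirst_update_swap_of_mem (hx : ov x ≠ un x) (hmem : x ∈ underFirst ov un b) :
    underFirst (Function.update ov x (un x)) (Function.update un x (ov x)) b =
      (underFirst ov un b).erase x := by
  ext z
  rcases eq_or_ne z x with rfl | hz
  · simpa [mem_underFirst_update_swap_self hx] using hmem
  · rw [mem_erase, mem_underFirst_update_swap_of_ne hz, and_iff_right hz]

end underFirst

namespace IsOverUnderPositions

open Finset

variable {n : ℕ} [NeZero n] {ι : Type*} [Fintype ι] [DecidableEq ι] {g : ZMod n → ι}
  {o : ZMod n → Bool} {ov un : ι → ZMod n}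

/-- Moving the base point past the over-passage of `y = g b` makes `y` counted: its
over-passage is now the last position of the traversal. -/
lemma card_underFirst_add_one_of_eq_true (hp : IsOverUnderPositions g o ov un) {b : ZMod n}
    (hb : o b = true) : #(underFirst ov un (b + 1)) = #(underFirst ov un b) + 1 := by
  set y := g b
  have hby : b = ov y := hp.eq_ov_of_eq_true hb
  have hinsert : underFirst ov un (b + 1) = insert y (underFirst ov un b) := by
    ext z
    rcases eq_or_ne z y with rfl | hz
    · simpa [mem_underFirst, hby] using
        ZMod.val_sub_add_one_lt_val_self_sub_add_one (hp.ov_ne_un y).symm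
    · obtain ⟨hov, hun⟩ := hp.ov_ne_and_un_ne_of_apply_ne (Ne.symm hz)
      rw [mem_insert, or_iff_right hz, mem_underFirst_add_one_iff hov hun]
  have hy : y ∉ underFirst ov un b := by simp [mem_underFirst, ← hby]
  rw [hinsert, card_insert_of_notMem hy]

lemma card_underFirst_add_one_add_toNat (hp : IsOverUnderPositions g o ov un) (b : ZMod n) :
    #(underFirst ov un (b + 1)) + (!o b).toNat = #(underFirst ov un b) + (o b).toNat := by
  cases hb : o b
  -- the over-passage case for the mirror image, whose `underFirst` is the complement
  · have hstep := hp.mirror.card_underFirst_add_one_of_eq_true (b := b) (by simp [hb])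
    rw [underFirst_comm hp.ov_ne_un, underFirst_comm hp.ov_ne_un, card_compl,
      card_compl] at hstep
    have := card_le_univ (underFirst ov un b)
    have := card_le_univ (underFirst ov un (b + 1))
    simp only [Bool.not_false, Bool.toNat_true, Bool.toNat_false]
    omega
  · simp [hp.card_underFirst_add_one_of_eq_true hb]

end IsOverUnderPositions

section GaussDiagram

open Finset

variable {c : ℕ} [NeZero c] {g : ZMod (2 * c) → Fin c} {o : ZMod (2 * c) → Bool}
  {ov un : Fin c → ZMod (2 * c)}

lemma IsGaussDiagram.exists_isOverUnderPositions (hD : IsGaussDiagram c g o) :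
    ∃ ov un, IsOverUnderPositions g o ov un := by
  have hunder : ∀ x, #{t | g t = x ∧ o t = false} = 1 := fun x => by
    have := card_filter_add_card_filter_not (s := {t | g t = x}) (fun t => o t = true)
    simp only [filter_filter, Bool.not_eq_true, hD.1 x, hD.2 x] at this
    omega
  choose ov hov using fun x => card_eq_one.mp (hD.2 x)
  choose un hun using fun x => card_eq_one.mp (hunder x)
  have hov' : ∀ t x, g t = x ∧ o t = true ↔ t = ov x := fun t x => by
    simpa using Finset.ext_iff.mp (hov x) t
  have hun' : ∀ t x, g t = x ∧ o t = false ↔ t = un x := fun t x => by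
    simpa using Finset.ext_iff.mp (hun x) t
  refine ⟨ov, un, fun t x => ?_, fun x => ((hov' _ x).2 rfl).2, fun x => ((hun' _ x).2 rfl).2⟩
  rw [← hov', ← hun']
  cases o t <;> simp

lemma IsOverUnderPositions.warpAt_eq_card_underFirst (hp : IsOverUnderPositions g o ov un)
    (b : ZMod (2 * c)) : warpAt c g o b = #(underFirst ov un b) := by
  unfold warpAt
  congr 1
  ext x
  have hpos : ∀ i : Fin (2 * c), g (b + (i : ℕ)) = x ↔
      (i : ℕ) = (ov x - b).val ∨ (i : ℕ) = (un x - b).val := fun i => by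
    rw [hp.apply_eq_iff, ZMod.add_natCast_eq_iff i.isLt, ZMod.add_natCast_eq_iff i.isLt]
  have hne := ZMod.val_sub_ne_val_sub b (hp.ov_ne_un x).symm
  simp only [mem_filter, mem_univ, true_and, mem_underFirst]
  constructor
  · rintro ⟨i, hi, hoi, hmin⟩
    rcases (hpos i).1 hi with hov | hun
    · rw [(ZMod.add_natCast_eq_iff i.isLt).2 hov, hp.over_true] at hoi
      simp at hoi
    · by_contra! hle
      exact hmin ⟨_, (ov x - b).val_lt⟩ (by simp only [Fin.lt_def]; omega)
        ((hpos _).2 (Or.inl rfl))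
  · intro hlt
    have hb : b + (((un x - b).val : ℕ) : ZMod (2 * c)) = un x := by
      rw [ZMod.natCast_zmod_val, add_sub_cancel]
    refine ⟨⟨_, (un x - b).val_lt⟩, by rw [hb, hp.apply_un], by rw [hb, hp.under_false],
      fun j hj => ?_⟩
    simp only [Fin.lt_def] at hj
    rw [Ne, hpos]
    omega

end GaussDiagram

namespace IsOverUnderPositions

open Finset

variable {c : ℕ} [NeZero c] {g : ZMod (2 * c) → Fin c} {o : ZMod (2 * c) → Bool}
  {ov un : Fin c → ZMod (2 * c)}

lemma warpAt_add_toNat_eq (hp : IsOverUnderPositions g o ov un)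
    (halt : ∀ t, o (t + 1) ≠ o t) (b b' : ZMod (2 * c)) :
    warpAt c g o b + (o b).toNat = warpAt c g o b' + (o b').toNat := by
  refine ZMod.apply_eq_of_periodic_one (f := fun b => warpAt c g o b + (o b).toNat)
    (fun b => ?_) b b'
  dsimp only
  rw [Bool.eq_not_iff.mpr (halt b), hp.warpAt_eq_card_underFirst, hp.warpAt_eq_card_underFirst]
  exact hp.card_underFirst_add_one_add_toNat b

lemma warpAt_eq_warp_add (hp : IsOverUnderPositions g o ov un)
    (halt : ∀ t, o (t + 1) ≠ o t) (b : ZMod (2 * c)) :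
    warpAt c g o b = warp c g o + (!o b).toNat := by
  set b₀ := ov ⟨0, NeZero.pos c⟩
  have key : ∀ b, warpAt c g o b + (o b).toNat = warpAt c g o b₀ + 1 := fun b => by
    simpa [b₀, hp.over_true] using hp.warpAt_add_toNat_eq halt b b₀
  have hwarp : warp c g o = warpAt c g o b₀ := by
    refine IsLeast.csInf_eq ⟨Set.mem_range_self b₀, ?_⟩
    rintro _ ⟨b, rfl⟩
    have := key b
    have := (o b).toNat_le
    omega
  have := key b
  rw [hwarp]
  cases hb : o b <;> simp only [hb, Bool.not_true, Bool.not_false, Bool.toNat_true,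
    Bool.toNat_false] at this ⊢ <;> omega

lemma warpAt_crossingChange_add_one (hp : IsOverUnderPositions g o ov un) {x : Fin c}
    {b : ZMod (2 * c)} (hx : x ∈ underFirst ov un b) :
    warpAt c g (crossingChange g o x) b + 1 = warpAt c g o b := by
  rw [(hp.crossingChange_update x).warpAt_eq_card_underFirst, hp.warpAt_eq_card_underFirst,
    underFirst_update_swap_of_mem (hp.ov_ne_un x) hx, card_erase_add_one hx]

lemma warpAt_le_warpAt_crossingChange_add_one (hp : IsOverUnderPositions g o ov un) (x : Fin c)
    (b : ZMod (2 * c)) : warpAt c g o b ≤ warpAt c g (crossingChange g o x) b + 1 := by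
  by_cases hx : x ∈ underFirst ov un b
  · exact (hp.warpAt_crossingChange_add_one hx).ge
  · rw [(hp.crossingChange_update x).warpAt_eq_card_underFirst, hp.warpAt_eq_card_underFirst]
    exact (card_le_card (underFirst_subset_update_swap_of_notMem hx)).trans (Nat.le_succ _)

theorem warp_crossingChange_le (hp : IsOverUnderPositions g o ov un)
    (halt : ∀ t, o (t + 1) ≠ o t) (x : Fin c) :
    warp c g (crossingChange g o x) ≤ warp c g o := by
  have h := hp.warpAt_crossingChange_add_one (mem_underFirst_un (hp.ov_ne_un x))
  rw [hp.warpAt_eq_warp_add halt, hp.under_false] at h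
  exact (Nat.sInf_le (Set.mem_range_self (un x))).trans (by simpa using h.le)

theorem warp_crossingChange_add_one (hp : IsOverUnderPositions g o ov un)
    (halt : ∀ t, o (t + 1) ≠ o t) (hno_monogon : ∀ t, g (t + 1) ≠ g t) (x : Fin c) :
    warp c g (crossingChange g o x) + 1 = warp c g o := by
  set b₀ := un x - 1
  have hb₀ : b₀ + 1 = un x := sub_add_cancel _ _
  have hgb₀ : g b₀ ≠ x := by simpa [hb₀, hp.apply_un] using (hno_monogon b₀).symm
  -- without monogons, the over-passage of `x` is not at `b₀`, so `x` is still counted there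
  have hmem : x ∈ underFirst ov un b₀ := by
    obtain ⟨hov, hun⟩ := hp.ov_ne_and_un_ne_of_apply_ne hgb₀
    rw [← mem_underFirst_add_one_iff hov hun, hb₀]
    exact mem_underFirst_un (hp.ov_ne_un x)
  have hob₀ : o b₀ = true := by
    have := halt b₀
    rw [hb₀, hp.under_false] at this
    simpa using this.symm
  have hval := hp.warpAt_crossingChange_add_one hmem
  rw [hp.warpAt_eq_warp_add halt, hob₀, Bool.not_true, Bool.toNat_false, add_zero] at hval
  have hleast : IsLeast (Set.range (warpAt c g (crossingChange g o x)))
      (warpAt c g (crossingChange g o x) b₀) := by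
    refine ⟨Set.mem_range_self b₀, ?_⟩
    rintro _ ⟨b, rfl⟩
    have := hp.warpAt_le_warpAt_crossingChange_add_one x b
    rw [hp.warpAt_eq_warp_add halt] at this
    omega
  rw [warp, hleast.csInf_eq, hval]

end IsOverUnderPositions

theorem unoriented_warp_crossing_change_general (c : ℕ) [NeZero c]
    (g : ZMod (2 * c) → Fin c) (o : ZMod (2 * c) → Bool) (hD : IsGaussDiagram c g o)
    (halt : ∀ t : ZMod (2 * c), o (t + 1) ≠ o t) (x : Fin c)
    (o' : ZMod (2 * c) → Bool) (ho' : o' = fun t => if g t = x then !(o t) else o t) :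
    min (warp c g o') (warp c (fun t => g (-t)) (fun t => o' (-t)))
      ≤ min (warp c g o) (warp c (fun t => g (-t)) (fun t => o (-t))) ∧
    ((∀ t : ZMod (2 * c), g (t + 1) ≠ g t) →
      min (warp c g o') (warp c (fun t => g (-t)) (fun t => o' (-t))) + 1
        = min (warp c g o) (warp c (fun t => g (-t)) (fun t => o (-t)))) := by
  obtain rfl : o' = crossingChange g o x := ho'
  obtain ⟨ov, un, hp⟩ := hD.exists_isOverUnderPositions
  have halt_rev := ne_comp_neg_of_forall_add_ne halt
  refine ⟨min_le_min (hp.warp_crossingChange_le halt x)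
    (hp.reverse.warp_crossingChange_le halt_rev x), fun hno_monogon => ?_⟩
  have hrev : warp c (fun t => g (-t)) (fun t => crossingChange g o x (-t)) + 1 =
      warp c (fun t => g (-t)) (fun t => o (-t)) :=
    hp.reverse.warp_crossingChange_add_one halt_rev (ne_comp_neg_of_forall_add_ne hno_monogon) x
  rw [← hp.warp_crossingChange_add_one halt hno_monogon x, ← hrev, min_add_add_right]

/-- Proposition 3.2: let `D = (g, o)` be an alternating diagram with `c ≥ 2` crossings and
let `D'` be the almost alternating diagram obtained from `D` by a crossing change at the
crossing `x` (negating `o` at the two preimages of `x` under `g`). Then `d̄(D') ≤ d̄(D)`;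
if moreover the diagram has no monogons (`g (t+1) ≠ g t` for all `t`), then
`d̄(D') = d̄(D) - 1`. -/
theorem unoriented_warp_crossing_change (c : ℕ) [NeZero c] (hc : 2 ≤ c)
    (g : ZMod (2 * c) → Fin c) (o : ZMod (2 * c) → Bool) (hD : IsGaussDiagram c g o)
    (halt : ∀ t : ZMod (2 * c), o (t + 1) ≠ o t) (x : Fin c)
    (o' : ZMod (2 * c) → Bool) (ho' : o' = fun t => if g t = x then !(o t) else o t) :
    min (warp c g o') (warp c (fun t => g (-t)) (fun t => o' (-t)))
      ≤ min (warp c g o) (warp c (fun t => g (-t)) (fun t => o (-t))) ∧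
    ((∀ t : ZMod (2 * c), g (t + 1) ≠ g t) →
      min (warp c g o') (warp c (fun t => g (-t)) (fun t => o' (-t))) + 1
        = min (warp c g o) (warp c (fun t => g (-t)) (fun t => o (-t)))) :=
  unoriented_warp_crossing_change_general c g o hD halt x o' ho'
end

section
/- For every n ≥ 3 and every k with 1 ≤ k ≤ n − 1, the number N of k-element subsets S of ZMod n such that no two elements of S are cyclically adjacent (i.e., there is no i ∈ ZMod n with both i ∈ S and i + 1 ∈ S) satisfies (n − k) · N = n · C(n − k, k); equivalently N = C(n − k, k) · n/(n − k). In particular N = 0 when k > ⌊n/2⌋. -/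
/-!
Read `ZMod n` as `{0, …, n - 1}` through `ZMod.val`: the cycle is then the path `0 — 1 — ⋯ — n-1`
plus the edge `{n - 1, 0}`. A set with no two adjacent elements either avoids `0`, and is then
such a set on the path `1, …, n - 1`, or contains `0`, and then the rest is such a set on the path
`2, …, n - 2`. A path with `m` vertices carries `C(m + 1 - k, k)` of them with `k` elements
(Pascal's rule, splitting on the last vertex), so `N = C(n - k, k) + C(n - k - 1, k - 1)`, and
`(n - k) C(n - k - 1, k - 1) = k C(n - k, k)`.
-/

open Finset

def sparseSubsets (s : Finset ℕ) (k : ℕ) : Finset (Finset ℕ) :=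
  (s.powersetCard k).filter fun T => ∀ a ∈ T, a + 1 ∉ T

lemma mem_sparseSubsets {s T : Finset ℕ} {k : ℕ} :
    T ∈ sparseSubsets s k ↔ T ⊆ s ∧ #T = k ∧ ∀ a ∈ T, a + 1 ∉ T := by
  simp [sparseSubsets, and_assoc]

@[simp]
lemma sparseSubsets_zero (s : Finset ℕ) : sparseSubsets s 0 = {∅} := by
  simp [sparseSubsets, filter_singleton]

lemma filter_notMem_sparseSubsets (s : Finset ℕ) (a k : ℕ) :
    (sparseSubsets s k).filter (a ∉ ·) = sparseSubsets (s.erase a) k := by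
  ext T
  simp only [mem_filter, mem_sparseSubsets, subset_erase]
  tauto

/-- For `a = 0` the truncated `a - 1` is `0`, so only `{0, 1}` is removed. -/
lemma card_filter_mem_sparseSubsets {s : Finset ℕ} {a : ℕ} (ha : a ∈ s) (k : ℕ) :
    #((sparseSubsets s (k + 1)).filter (a ∈ ·)) = #(sparseSubsets (s \ {a - 1, a, a + 1}) k) := by
  refine card_nbij' (·.erase a) (insert a) ?_ ?_ ?_ ?_
  · intro T hT
    simp only [mem_coe, mem_filter, mem_sparseSubsets] at hT
    obtain ⟨⟨hTs, hcard, hsparse⟩, haT⟩ := hT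
    simp only [mem_coe, mem_sparseSubsets]
    refine ⟨fun x hx => ?_, by simp [haT, hcard],
      fun x hx => hsparse x (mem_of_mem_erase hx) ∘ mem_of_mem_erase⟩
    obtain ⟨hxa, hxT⟩ := mem_erase.mp hx
    have h1 : x + 1 ≠ a := fun h => hsparse x hxT (h ▸ haT)
    have h2 : x ≠ a + 1 := fun h => hsparse a haT (h ▸ hxT)
    simp only [mem_sdiff, mem_insert, mem_singleton]
    exact ⟨hTs hxT, by omega⟩
  · intro T hT
    simp only [mem_coe, mem_sparseSubsets, subset_sdiff, disjoint_left] at hT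
    obtain ⟨⟨hTs, hTa⟩, hcard, hsparse⟩ := hT
    simp only [mem_insert, mem_singleton, not_or] at hTa
    simp only [mem_coe, mem_filter, mem_sparseSubsets, mem_insert_self, and_true]
    refine ⟨insert_subset ha hTs, ?_, ?_⟩
    · rw [card_insert_of_notMem fun h => (hTa h).2.1 rfl, hcard]
    simp only [mem_insert, forall_eq_or_imp]
    refine ⟨fun h => ?_, fun x hx h => ?_⟩
    · rcases h with h | h
      · omega
      · exact (hTa h).2.2 rfl
    · rcases h with h | h
      · exact (hTa hx).1 (by omega)
      · exact hsparse x hx h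
  · intro T hT
    simp only [mem_coe, mem_filter] at hT
    exact insert_erase hT.2
  · intro T hT
    simp only [mem_coe, mem_sparseSubsets, subset_sdiff, disjoint_left] at hT
    exact erase_insert fun h => by simpa using hT.1.2 h

lemma card_sparseSubsets_Ico (a m k : ℕ) :
    #(sparseSubsets (Ico a (a + m)) k) = (m + 1 - k).choose k := by
  induction m using Nat.twoStepInduction generalizing k with
  | zero => cases k <;> simp [sparseSubsets, filter_singleton]
  | one => rcases k with _ | _ | k <;> simp [sparseSubsets, powersetCard_one, filter_singleton]
  | more m ih₁ ih₂ =>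
    cases k with
    | zero => simp
    | succ k =>
      have htop : a + m + 1 ∈ Ico a (a + (m + 2)) := by simp; omega
      have herase : (Ico a (a + (m + 2))).erase (a + m + 1) = Ico a (a + (m + 1)) := by
        ext; simp; omega
      have hsdiff : Ico a (a + (m + 2)) \ {a + m + 1 - 1, a + m + 1, a + m + 1 + 1} =
          Ico a (a + m) := by
        ext; simp; omega
      rw [← card_filter_add_card_filter_not (p := (a + m + 1 ∈ ·)),
        card_filter_mem_sparseSubsets htop, hsdiff, filter_notMem_sparseSubsets, herase,
        ih₁, ih₂]
      rcases le_or_gt k m with hkm | hkm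
      · rw [show m + 2 + 1 - (k + 1) = (m + 1 - k) + 1 by omega, Nat.choose_succ_succ',
          show m + 1 + 1 - (k + 1) = m + 1 - k by omega]
      · rw [Nat.choose_eq_zero_of_lt (by omega), Nat.choose_eq_zero_of_lt (by omega),
          Nat.choose_eq_zero_of_lt (by omega)]

def cyclicSparseSubsets (n k : ℕ) : Finset (Finset ℕ) :=
  (sparseSubsets (range n) k).filter fun T => ¬(n - 1 ∈ T ∧ 0 ∈ T)

lemma card_cyclicSparseSubsets {n : ℕ} (hn : 3 ≤ n) (k : ℕ) :
    #(cyclicSparseSubsets n (k + 1)) = (n - (k + 1)).choose (k + 1) + (n - (k + 2)).choose k := by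
  have hmem : (cyclicSparseSubsets n (k + 1)).filter (0 ∈ ·) =
      (sparseSubsets (range (n - 1)) (k + 1)).filter (0 ∈ ·) := by
    rw [show range (n - 1) = (range n).erase (n - 1) by ext; simp; omega,
      ← filter_notMem_sparseSubsets, cyclicSparseSubsets]
    ext T
    simp only [mem_filter]
    tauto
  have hnotMem : (cyclicSparseSubsets n (k + 1)).filter (0 ∉ ·) =
      sparseSubsets (Ico 1 (1 + (n - 1))) (k + 1) := by
    rw [show Ico 1 (1 + (n - 1)) = (range n).erase 0 by ext; simp; omega,
      ← filter_notMem_sparseSubsets, cyclicSparseSubsets]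
    ext T
    simp only [mem_filter]
    tauto
  have hsdiff : range (n - 1) \ {0 - 1, 0, 0 + 1} = Ico 2 (2 + (n - 3)) := by
    ext; simp; omega
  rw [← card_filter_add_card_filter_not (p := (0 ∈ ·)), hmem, hnotMem,
    card_filter_mem_sparseSubsets (by simp; omega), hsdiff, card_sparseSubsets_Ico,
    card_sparseSubsets_Ico, show n - 3 + 1 - k = n - (k + 2) by omega,
    show n - 1 + 1 - (k + 1) = n - (k + 1) by omega, add_comm]

lemma forall_add_one_mod_notMem_iff {n : ℕ} {T : Finset ℕ} (hT : T ⊆ range n) :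
    (∀ a ∈ T, (a + 1) % n ∉ T) ↔ (∀ a ∈ T, a + 1 ∉ T) ∧ ¬(n - 1 ∈ T ∧ 0 ∈ T) := by
  have hlt {a : ℕ} (ha : a ∈ T) : a < n := mem_range.mp (hT ha)
  constructor
  · intro h
    refine ⟨fun a ha ha₁ => h a ha ?_, fun ⟨hlast, hzero⟩ => h _ hlast ?_⟩
    · rwa [Nat.mod_eq_of_lt (hlt ha₁)]
    · rwa [Nat.sub_add_cancel (by have := hlt hlast; omega), Nat.mod_self]
  · rintro ⟨hsparse, hwrap⟩ a ha hmod
    rcases (show a + 1 ≤ n from hlt ha).lt_or_eq with h | h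
    · exact hsparse a ha (by rwa [Nat.mod_eq_of_lt h] at hmod)
    · rw [h, Nat.mod_self] at hmod
      exact hwrap ⟨by rwa [← h, Nat.add_sub_cancel], hmod⟩

lemma forall_add_one_notMem_iff_image_val {n : ℕ} [NeZero n] (S : Finset (ZMod n)) :
    (∀ i ∈ S, i + 1 ∉ S) ↔ ∀ a ∈ S.image ZMod.val, (a + 1) % n ∉ S.image ZMod.val := by
  have hval (i : ZMod n) : (i + 1).val = (i.val + 1) % n := by
    rw [ZMod.val_add, ZMod.val_one_eq_one_mod, Nat.add_mod_mod]
  simp only [forall_mem_image, ← hval, (ZMod.val_injective n).mem_finset_image]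

lemma card_filter_zmod_eq_card_cyclicSparseSubsets (n k : ℕ) [NeZero n] :
    ((Finset.univ : Finset (Finset (ZMod n))).filter fun S =>
      S.card = k ∧ ∀ i ∈ S, i + 1 ∉ S).card = #(cyclicSparseSubsets n k) := by
  have himage_val (S : Finset (ZMod n)) : S.image ZMod.val ⊆ range n := by
    simp [subset_iff, ZMod.val_lt]
  have hval_cast {T : Finset ℕ} (hT : T ⊆ range n) :
      (T.image (Nat.cast : ℕ → ZMod n)).image ZMod.val = T := by
    rw [image_image]
    nth_rw 2 [← image_id (s := T)]
    exact image_congr fun a ha => ZMod.val_cast_of_lt (mem_range.mp (hT ha))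
  refine card_nbij' (·.image ZMod.val) (·.image Nat.cast) ?_ ?_ ?_ ?_
  · intro S hS
    simp only [mem_coe, mem_filter, mem_univ, true_and] at hS
    obtain ⟨hcard, hS⟩ := hS
    rw [forall_add_one_notMem_iff_image_val, forall_add_one_mod_notMem_iff (himage_val S)] at hS
    simp only [mem_coe, cyclicSparseSubsets, mem_filter, mem_sparseSubsets]
    exact ⟨⟨himage_val S, by rw [card_image_of_injective _ (ZMod.val_injective n), hcard], hS.1⟩,
      hS.2⟩
  · intro T hT
    simp only [mem_coe, cyclicSparseSubsets, mem_filter, mem_sparseSubsets] at hT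
    obtain ⟨⟨hTn, hcard, hsparse⟩, hwrap⟩ := hT
    simp only [mem_coe, mem_filter, mem_univ, true_and]
    rw [forall_add_one_notMem_iff_image_val, hval_cast hTn, forall_add_one_mod_notMem_iff hTn]
    refine ⟨?_, hsparse, hwrap⟩
    calc #(T.image Nat.cast) = #((T.image (Nat.cast : ℕ → ZMod n)).image ZMod.val) :=
          (card_image_of_injective _ (ZMod.val_injective n)).symm
      _ = k := by rw [hval_cast hTn, hcard]
  · intro S _
    simp [image_image, Function.comp_def]
  · intro T hT
    exact hval_cast (mem_sparseSubsets.mp (mem_filter.mp hT).1).1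

lemma add_one_mul_choose_add_choose (m j : ℕ) :
    (m + 1) * ((m + 1).choose (j + 1) + m.choose j) = (m + j + 2) * (m + 1).choose (j + 1) := by
  rw [mul_add, Nat.add_one_mul_choose_eq]
  ring

/-- For every `n ≥ 3` and every `k` with `1 ≤ k ≤ n - 1`, the number `N` of `k`-element
subsets `S` of `ZMod n` with no two cyclically adjacent elements (there is no `i` with
both `i ∈ S` and `i + 1 ∈ S`) satisfies `(n - k) * N = n * C(n - k, k)`, i.e.
`N = C(n - k, k) * n / (n - k)`. In particular `N = 0` when `k > ⌊n/2⌋`. -/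
theorem card_no_cyclically_adjacent_subsets (n k : ℕ) [NeZero n] (hn : 3 ≤ n)
    (hk1 : 1 ≤ k) (hk2 : k ≤ n - 1) :
    (n - k) * ((Finset.univ : Finset (Finset (ZMod n))).filter fun S =>
        S.card = k ∧ ∀ i ∈ S, i + 1 ∉ S).card = n * Nat.choose (n - k) k ∧
    (n / 2 < k → ((Finset.univ : Finset (Finset (ZMod n))).filter fun S =>
        S.card = k ∧ ∀ i ∈ S, i + 1 ∉ S).card = 0) := by
  obtain ⟨j, rfl⟩ : ∃ j, k = j + 1 := ⟨k - 1, by omega⟩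
  obtain ⟨m, hm⟩ : ∃ m, n = m + j + 2 := ⟨n - j - 2, by omega⟩
  rw [card_filter_zmod_eq_card_cyclicSparseSubsets, card_cyclicSparseSubsets hn,
    show n - (j + 1) = m + 1 by omega, show n - (j + 2) = m by omega]
  refine ⟨by rw [add_one_mul_choose_add_choose, hm], fun hj => ?_⟩
  rw [Nat.choose_eq_zero_of_lt (by omega), Nat.choose_eq_zero_of_lt (by omega)]
end

section
/- (Theorem 6.1) For every n ≥ 4, the generating polynomial of independent sets of the graph G_n, namely the sum over all independent sets S of G_n of X^(card S), equals 1 + (n+2)·X + Σ_{k=2}^{⌊n/2⌋} (n/(n−k))·C(n−k, k)·X^k as a polynomial over ℚ. Equivalently: G_n has exactly one independent set of size 0, exactly n+2 independent sets of size 1, exactly n·C(n−k, k)/(n−k) independent sets of size k for each 2 ≤ k ≤ ⌊n/2⌋, and no independent sets of size greater than ⌊n/2⌋. -/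
/-- The region-connect graph `G_n` of the standard projection `T(2,n)` of the
`(2,n)`-torus link: vertices are the `n + 2` regions; two distinct vertices `i, j` are
adjacent iff `i ≥ n`, or `j ≥ n`, or both `i, j < n` and `j ≡ i + 1` or `j ≡ i - 1`
(mod `n`). -/
def torusGraph (n : ℕ) : SimpleGraph (Fin (n + 2)) where
  Adj i j := i ≠ j ∧ (n ≤ (i : ℕ) ∨ n ≤ (j : ℕ) ∨
    ((i : ℕ) < n ∧ (j : ℕ) < n ∧
      ((j : ℕ) = ((i : ℕ) + 1) % n ∨ (i : ℕ) = ((j : ℕ) + 1) % n)))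
  symm := by
    constructor
    intro i j ⟨hne, h⟩
    exact ⟨hne.symm, by tauto⟩
  loopless := by
    constructor
    intro i ⟨hne, _⟩
    exact hne rfl

instance (n : ℕ) : DecidableRel (torusGraph n).Adj := fun i j =>
  inferInstanceAs (Decidable (i ≠ j ∧ (n ≤ (i : ℕ) ∨ n ≤ (j : ℕ) ∨
    ((i : ℕ) < n ∧ (j : ℕ) < n ∧
      ((j : ℕ) = ((i : ℕ) + 1) % n ∨ (i : ℕ) = ((j : ℕ) + 1) % n)))))

/-- A finite set of vertices is independent iff no two of its elements are adjacent. -/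
def IsIndepFinset (n : ℕ) (S : Finset (Fin (n + 2))) : Prop :=
  ∀ i ∈ S, ∀ j ∈ S, ¬ (torusGraph n).Adj i j

instance (n : ℕ) : DecidablePred (IsIndepFinset n) := fun S =>
  inferInstanceAs (Decidable (∀ i ∈ S, ∀ j ∈ S, ¬ (torusGraph n).Adj i j))

/-! Every vertex `i ≥ n` is adjacent to all others, so an independent set with at least two
elements lies on the `n`-cycle `0, …, n - 1`. Its `k`-element independent sets either avoid
`n - 1`, and are then those of the path `0, …, n - 2`, or consist of `n - 1` and a
`(k - 1)`-element independent set of the path `1, …, n - 3`. Independent `k`-sets of a path on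
`m` vertices obey Pascal's recursion (split on the last vertex) and number `C(m + 1 - k, k)`,
so the cycle has `C(n - k, k) + C(n - k - 1, k - 1) = n / (n - k) · C(n - k, k)` of them. -/

open Finset Polynomial

namespace Finset

theorem card_filter_powersetCard_insert {α : Type*} [DecidableEq α] {a : α} {s : Finset α}
    (ha : a ∉ s) (k : ℕ) (p : Finset α → Prop) [DecidablePred p] :
    #{S ∈ (insert a s).powersetCard (k + 1) | p S} =
      #{S ∈ s.powersetCard (k + 1) | p S} + #{T ∈ s.powersetCard k | p (insert a T)} := by
  have hdisj : Disjoint {S ∈ s.powersetCard (k + 1) | p S}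
      ({T ∈ s.powersetCard k | p (insert a T)}.image (insert a)) := by
    simp only [disjoint_left, mem_filter, mem_powersetCard, mem_image, not_exists, not_and]
    rintro S ⟨⟨hS, -⟩, -⟩ T - rfl
    exact ha (hS (mem_insert_self a T))
  have hinj : Set.InjOn (insert a)
      (({T ∈ s.powersetCard k | p (insert a T)} : Finset (Finset α)) : Set (Finset α)) := by
    intro T hT U hU hTU
    simp only [mem_coe, mem_filter, mem_powersetCard] at hT hU
    rw [← erase_insert (fun h => ha (hT.1.1 h)), hTU, erase_insert (fun h => ha (hU.1.1 h))]
  rw [powersetCard_succ_insert ha, filter_union, filter_image, card_union_of_disjoint hdisj,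
    card_image_of_injOn hinj]

theorem filter_powersetCard_insert_notMem {α : Type*} [DecidableEq α] {a : α} {s : Finset α}
    (ha : a ∉ s) (k : ℕ) (p : Finset α → Prop) [DecidablePred p] :
    {T ∈ (insert a s).powersetCard k | a ∉ T ∧ p T} = {T ∈ s.powersetCard k | p T} := by
  ext T
  simp only [mem_filter, mem_powersetCard]
  constructor
  · rintro ⟨⟨hT, hk⟩, haT, hp⟩
    exact ⟨⟨(subset_insert_iff_of_notMem haT).1 hT, hk⟩, hp⟩
  · rintro ⟨⟨hT, hk⟩, hp⟩
    exact ⟨⟨hT.trans (subset_insert a s), hk⟩, fun h => ha (hT h), hp⟩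

end Finset

def IsPathIndep (S : Finset ℕ) : Prop := ∀ i ∈ S, i + 1 ∉ S

instance : DecidablePred IsPathIndep := fun S =>
  inferInstanceAs (Decidable (∀ i ∈ S, i + 1 ∉ S))

theorem isPathIndep_insert {a : ℕ} {T : Finset ℕ} :
    IsPathIndep (insert a T) ↔ a + 1 ∉ T ∧ (∀ i ∈ T, i + 1 ≠ a) ∧ IsPathIndep T := by
  simp only [IsPathIndep, mem_insert, forall_eq_or_imp, not_or]
  grind

theorem isPathIndep_map_addRightEmbedding {T : Finset ℕ} (c : ℕ) :
    IsPathIndep (T.map (addRightEmbedding c)) ↔ IsPathIndep T := by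
  simp only [IsPathIndep, mem_map, addRightEmbedding_apply, forall_exists_index, and_imp,
    forall_apply_eq_imp_iff₂, not_exists, not_and]
  grind

theorem card_pathIndep_map_addRightEmbedding (s : Finset ℕ) (c k : ℕ) :
    #{T ∈ (s.map (addRightEmbedding c)).powersetCard k | IsPathIndep T} =
      #{T ∈ s.powersetCard k | IsPathIndep T} := by
  rw [powersetCard_map, filter_map, card_map]
  exact congrArg card (filter_congr fun T _ => isPathIndep_map_addRightEmbedding c)

theorem card_pathIndep_add_two (m k : ℕ) :
    #{S ∈ (range (m + 2)).powersetCard (k + 1) | IsPathIndep S} =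
      #{S ∈ (range (m + 1)).powersetCard (k + 1) | IsPathIndep S} +
        #{S ∈ (range m).powersetCard k | IsPathIndep S} := by
  rw [range_add_one (n := m + 1), card_filter_powersetCard_insert notMem_range_self]
  congr 1
  rw [range_add_one, ← filter_powersetCard_insert_notMem notMem_range_self]
  refine congrArg card (filter_congr fun T hT => ?_)
  have hlt : ∀ i ∈ T, i < m + 1 := fun i hi => by
    simpa [← range_add_one] using (mem_powersetCard.1 hT).1 hi
  rw [isPathIndep_insert]
  grind

theorem card_pathIndep (m k : ℕ) :
    #{S ∈ (range m).powersetCard k | IsPathIndep S} = (m + 1 - k).choose k := by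
  induction m using Nat.strong_induction_on generalizing k with
  | _ m ih =>
    match m, k with
    | _, 0 => simp [IsPathIndep, filter_singleton]
    | m + 2, k + 1 =>
      rw [card_pathIndep_add_two, ih _ (by omega), ih _ (by omega)]
      rcases Nat.lt_or_ge (m + 1) k with h | h
      · rw [Nat.choose_eq_zero_of_lt (by omega), Nat.choose_eq_zero_of_lt (by omega),
          Nat.choose_eq_zero_of_lt (by omega)]
      · rw [show m + 2 + 1 - (k + 1) = m + 1 - k + 1 by omega,
          show m + 1 + 1 - (k + 1) = m + 1 - k by omega, Nat.choose_succ_succ', add_comm]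
    | 0, k + 1 => simp
    | 1, 1 => simp [IsPathIndep, powersetCard_one, filter_singleton]
    | 1, k + 2 => simp

theorem card_pathIndep_of_zero_notMem (m k : ℕ) :
    #{T ∈ (range m).powersetCard k | 0 ∉ T ∧ IsPathIndep T} = (m - k).choose k := by
  cases m with
  | zero =>
    cases k with
    | zero => simp [IsPathIndep, filter_singleton]
    | succ k => rw [powersetCard_eq_empty.2 (by simp)]; simp
  | succ j =>
    rw [range_add_one', filter_powersetCard_insert_notMem (by simp)]
    exact (card_pathIndep_map_addRightEmbedding (range j) 1 k).trans (card_pathIndep j k)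

-- Only meaningful for `S ⊆ range n` with `2 ≤ n`: for `n = 1` it also excludes `{0}`.
def IsCycleIndep (n : ℕ) (S : Finset ℕ) : Prop := ∀ i ∈ S, (i + 1) % n ∉ S

instance (n : ℕ) : DecidablePred (IsCycleIndep n) := fun S =>
  inferInstanceAs (Decidable (∀ i ∈ S, (i + 1) % n ∉ S))

theorem isCycleIndep_iff_isPathIndep {m : ℕ} {S : Finset ℕ} (hS : S ⊆ range m) :
    IsCycleIndep (m + 1) S ↔ IsPathIndep S := by
  refine forall₂_congr fun i hi => ?_
  rw [Nat.mod_eq_of_lt (by simpa using hS hi)]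

theorem isCycleIndep_insert_iff {m : ℕ} {T : Finset ℕ} (hT : T ⊆ range (m + 1)) :
    IsCycleIndep (m + 2) (insert (m + 1) T) ↔ m ∉ T ∧ 0 ∉ T ∧ IsPathIndep T := by
  have hmod : ∀ i ∈ T, (i + 1) % (m + 2) = i + 1 := fun i hi =>
    Nat.mod_eq_of_lt (by simpa using hT hi)
  simp only [IsCycleIndep, IsPathIndep, mem_insert, forall_eq_or_imp, Nat.mod_self, not_or]
  grind

theorem card_cycleIndep {n k : ℕ} (hn : 2 ≤ n) (hk : 1 ≤ k) :
    #{S ∈ (range n).powersetCard k | IsCycleIndep n S} =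
      (n - k).choose k + (n - k - 1).choose (k - 1) := by
  obtain ⟨m, rfl⟩ := Nat.exists_eq_add_of_le' hn
  obtain ⟨k, rfl⟩ := Nat.exists_eq_add_of_le' hk
  rw [range_add_one (n := m + 1), card_filter_powersetCard_insert notMem_range_self]
  congr 1
  · rw [filter_congr fun S hS => isCycleIndep_iff_isPathIndep (mem_powersetCard.1 hS).1,
      card_pathIndep]
  · rw [filter_congr fun T hT => isCycleIndep_insert_iff (mem_powersetCard.1 hT).1,
      range_add_one, filter_powersetCard_insert_notMem notMem_range_self,
      card_pathIndep_of_zero_notMem]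
    congr 1
    omega

theorem add_one_mod_ne_self {n i : ℕ} (hn : 2 ≤ n) (hi : i < n) : (i + 1) % n ≠ i := by
  rcases Nat.lt_or_ge (i + 1) n with h | h
  · rw [Nat.mod_eq_of_lt h]; omega
  · rw [show i + 1 = n by omega, Nat.mod_self]; omega

theorem torusGraph_adj_iff_of_lt {n : ℕ} (hn : 2 ≤ n) {i j : Fin (n + 2)} (hi : (i : ℕ) < n)
    (hj : (j : ℕ) < n) :
    (torusGraph n).Adj i j ↔ (j : ℕ) = (i + 1) % n ∨ (i : ℕ) = (j + 1) % n := by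
  simp only [torusGraph, hi, hj, true_and, not_le.2 hi, not_le.2 hj, false_or, ne_eq,
    and_iff_right_iff_imp]
  rintro h rfl
  rcases h with h | h <;> exact add_one_mod_ne_self hn hi h.symm

theorem IsIndepFinset.val_lt {n : ℕ} {S : Finset (Fin (n + 2))} (hS : IsIndepFinset n S)
    (hcard : 1 < #S) {i : Fin (n + 2)} (hi : i ∈ S) : (i : ℕ) < n := by
  obtain ⟨j, hj, hji⟩ := exists_mem_ne hcard i
  by_contra h
  exact hS j hj i hi ⟨hji, Or.inr (Or.inl (not_lt.1 h))⟩

theorem isIndepFinset_iff_isCycleIndep {n : ℕ} (hn : 2 ≤ n) {S : Finset (Fin (n + 2))}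
    (hcard : 1 < #S) :
    IsIndepFinset n S ↔
      S.map Fin.valEmbedding ⊆ range n ∧ IsCycleIndep n (S.map Fin.valEmbedding) := by
  simp only [subset_iff, IsCycleIndep, mem_map, Fin.valEmbedding_apply, mem_range,
    forall_exists_index, and_imp, forall_apply_eq_imp_iff₂, not_exists, not_and]
  constructor
  · intro hS
    have hlt := fun i (hi : i ∈ S) => hS.val_lt hcard hi
    refine ⟨hlt, fun i hi j hj hji => hS i hi j hj ?_⟩
    exact (torusGraph_adj_iff_of_lt hn (hlt i hi) (hlt j hj)).2 (Or.inl hji)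
  · rintro ⟨hlt, hS⟩ i hi j hj hij
    rcases (torusGraph_adj_iff_of_lt hn (hlt i hi) (hlt j hj)).1 hij with h | h
    · exact hS i hi j hj h
    · exact hS j hj i hi h

theorem card_isIndepFinset_of_le_one (n : ℕ) {k : ℕ} (hk : k ≤ 1) :
    #{S ∈ univ.filter (IsIndepFinset n) | #S = k} = (n + 2).choose k := by
  have hindep : ∀ S : Finset (Fin (n + 2)), #S ≤ 1 → IsIndepFinset n S := fun S hS i hi j hj =>
    card_le_one.1 hS i hi j hj ▸ (torusGraph n).irrefl
  rw [filter_filter,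
    filter_congr fun S _ => and_iff_right_of_imp fun h => hindep S (h.le.trans hk),
    univ_filter_card_eq, card_powersetCard, card_univ, Fintype.card_fin]

theorem card_isIndepFinset_eq_card_cycleIndep {n k : ℕ} (hn : 2 ≤ n) (hk : 2 ≤ k) :
    #{S ∈ univ.filter (IsIndepFinset n) | #S = k} =
      #{T ∈ (range n).powersetCard k | IsCycleIndep n T} := by
  have hrange : {T ∈ (range n).powersetCard k | IsCycleIndep n T} =
      {T ∈ (range (n + 2)).powersetCard k | T ⊆ range n ∧ IsCycleIndep n T} := by
    ext T
    simp only [mem_filter, mem_powersetCard]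
    exact ⟨fun ⟨⟨hT, hT'⟩, h⟩ => ⟨⟨hT.trans (range_subset_range.2 (by omega)), hT'⟩, hT, h⟩,
      fun ⟨⟨_, hT'⟩, hT, h⟩ => ⟨⟨hT, hT'⟩, h⟩⟩
  rw [hrange, ← Nat.Iio_eq_range (a := n + 2), ← Fin.map_valEmbedding_univ, powersetCard_map,
    filter_map, card_map, ← univ_filter_card_eq, filter_filter, filter_filter]
  refine congrArg card (filter_congr fun S _ => ?_)
  rw [and_comm]
  exact and_congr_right fun h => isIndepFinset_iff_isCycleIndep hn (by omega)

theorem card_isIndepFinset_of_two_le {n k : ℕ} (hn : 2 ≤ n) (hk : 2 ≤ k) :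
    #{S ∈ univ.filter (IsIndepFinset n) | #S = k} =
      (n - k).choose k + (n - k - 1).choose (k - 1) := by
  rw [card_isIndepFinset_eq_card_cycleIndep hn hk, card_cycleIndep hn (by omega)]

theorem sum_X_pow_card {α R : Type*} [Fintype α] [CommSemiring R] (𝒜 : Finset (Finset α)) :
    ∑ S ∈ 𝒜, (X : R[X]) ^ #S =
      ∑ k ∈ range (Fintype.card α + 1), C (#{S ∈ 𝒜 | #S = k} : R) * X ^ k := by
  rw [← sum_fiberwise_of_maps_to' (g := card) (t := range (Fintype.card α + 1))
    (fun S _ => mem_range.2 (Nat.lt_succ_of_le (card_le_univ S))) (X ^ ·)]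
  simp only [sum_const, nsmul_eq_mul, map_natCast]

theorem choose_add_choose_pred_eq_div_mul {K : Type*} [Field K] [CharZero K] {n k : ℕ}
    (hk : 1 ≤ k) (hkn : k < n) :
    (((n - k).choose k + (n - k - 1).choose (k - 1) : ℕ) : K) =
      n / (n - k) * (n - k).choose k := by
  obtain ⟨m, hm⟩ : ∃ m, n - k = m + 1 := ⟨n - k - 1, by omega⟩
  obtain ⟨j, rfl⟩ := Nat.exists_eq_add_of_le' hk
  have key : ((m + 1) * m.choose j : K) = (m + 1).choose (j + 1) * (j + 1) := by
    exact_mod_cast Nat.add_one_mul_choose_eq m j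
  have hn : (n : K) = m + 1 + (j + 1) := by exact_mod_cast (by omega : n = m + 1 + (j + 1))
  rw [hm, Nat.add_sub_cancel, Nat.add_sub_cancel, hn]
  push_cast
  field_simp
  linear_combination key

open Polynomial in
/-- Theorem 6.1: for every `n ≥ 4`, the generating polynomial over `ℚ` of the independent
sets of `G_n` (the I-generating function of the standard `(2,n)`-torus link projection)
equals `1 + (n+2) X + Σ_{k=2}^{⌊n/2⌋} (n/(n-k)) C(n-k, k) X^k`. -/
theorem torus_I_generating_function (n : ℕ) (hn : 4 ≤ n) :
    ∑ S ∈ (Finset.univ : Finset (Finset (Fin (n + 2)))).filter (IsIndepFinset n),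
        (X : ℚ[X]) ^ S.card
      = 1 + C ((n : ℚ) + 2) * X +
        ∑ k ∈ Finset.Icc 2 (n / 2),
          C ((n : ℚ) / ((n : ℚ) - (k : ℚ)) * (Nat.choose (n - k) k : ℚ)) * X ^ k := by
  have hsub : insert 0 (insert 1 (Icc 2 (n / 2))) ⊆ range (n + 2 + 1) := by
    intro k
    simp only [mem_insert, mem_Icc, mem_range]
    omega
  have hvanish : ∀ k ∈ range (n + 2 + 1), k ∉ insert 0 (insert 1 (Icc 2 (n / 2))) →
      C (#{S ∈ univ.filter (IsIndepFinset n) | #S = k} : ℚ) * X ^ k = 0 := by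
    intro k _ hk
    simp only [mem_insert, mem_Icc, not_or, not_and, not_le] at hk
    rw [card_isIndepFinset_of_two_le (by omega) (by omega), Nat.choose_eq_zero_of_lt (by omega),
      Nat.choose_eq_zero_of_lt (by omega)]
    simp
  have hterm : ∀ k ∈ Icc 2 (n / 2),
      C (#{S ∈ univ.filter (IsIndepFinset n) | #S = k} : ℚ) * X ^ k =
        C ((n : ℚ) / ((n : ℚ) - (k : ℚ)) * (Nat.choose (n - k) k : ℚ)) * X ^ k := by
    intro k hk
    rw [mem_Icc] at hk
    rw [card_isIndepFinset_of_two_le (by omega) hk.1,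
      choose_add_choose_pred_eq_div_mul (by omega) (by omega)]
  rw [sum_X_pow_card, Fintype.card_fin, ← sum_subset hsub hvanish, sum_insert (by simp),
    sum_insert (by simp), sum_congr rfl hterm, card_isIndepFinset_of_le_one n le_rfl,
    card_isIndepFinset_of_le_one n zero_le_one]
  simp only [Nat.choose_zero_right, Nat.choose_one_right, pow_zero, pow_one, Nat.cast_one,
    map_one, mul_one, Nat.cast_add, Nat.cast_ofNat, add_assoc]
end

section
/- (Proposition 6.3) For every n ≥ 4, the polynomials f_m ∈ ℚ[X] defined for m ≥ 2 by f_m = 1 + (m+2)·X + Σ_{k=2}^{⌊m/2⌋} (m/(m−k))·C(m−k, k)·X^k satisfy the recurrence f_n − f_{n−1} − X·f_{n−2} = −2·X². -/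
open Polynomial

/-- The I-generating function of the standard projection `T(2,m)` of the `(2,m)`-torus
link (`m ≥ 2`): `f_m = 1 + (m+2) X + Σ_{k=2}^{⌊m/2⌋} (m/(m-k)) C(m-k, k) X^k ∈ ℚ[X]`. -/
noncomputable def torusGen (m : ℕ) : ℚ[X] :=
  1 + C ((m : ℚ) + 2) * X +
    ∑ k ∈ Finset.Icc 2 (m / 2),
      C ((m : ℚ) / ((m : ℚ) - (k : ℚ)) * (Nat.choose (m - k) k : ℚ)) * X ^ k

/-!
Let `F_m = Σ_k C(m-k, k) X^k` be the Fibonacci polynomials, so that `F_{m+2} = F_{m+1} + X F_m`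
by Pascal's rule. Since `m/(m-k) · C(m-k, k) = C(m-k, k) + C(m-k-1, k-1)` for `0 < k < m`,
the polynomial `f_m` is `F_m + X F_{m-2} + 2X`. The part `F_m + X F_{m-2}` satisfies the
Fibonacci recurrence, so only the correction `2X` contributes: `2X - 2X - X · 2X = -2X²`.
-/

theorem Nat.choose_succ_sub_succ (m k : ℕ) :
    (m + 1 - k).choose (k + 1) = (m - k).choose (k + 1) + (m - k).choose k := by
  rcases le_or_gt k m with h | h
  · rw [Nat.sub_add_comm h, Nat.choose_succ_succ', add_comm]
  · simp [Nat.sub_eq_zero_of_le h, Nat.sub_eq_zero_of_le h.le, Nat.choose_eq_zero_of_lt h.pos]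

theorem cast_div_mul_choose_eq_choose_add_choose {K : Type*} [Field K] [CharZero K] {m k : ℕ}
    (hk : 0 < k) (hkm : k < m) :
    (m : K) / (m - k) * (m - k).choose k = (m - k).choose k + (m - k - 1).choose (k - 1) := by
  obtain ⟨n, rfl⟩ : ∃ n, m = n + 1 + k := ⟨m - k - 1, by omega⟩
  obtain ⟨j, rfl⟩ : ∃ j, k = j + 1 := ⟨k - 1, by omega⟩
  have h : ((n + 1 : ℕ) : K) * n.choose j = (n + 1).choose (j + 1) * (j + 1 : ℕ) := by
    exact_mod_cast Nat.add_one_mul_choose_eq n j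
  simp only [Nat.add_sub_cancel]
  push_cast at h ⊢
  rw [add_sub_cancel_right, div_mul_eq_mul_div, div_eq_iff (Nat.cast_add_one_ne_zero n)]
  linear_combination -h

section FibPoly

variable (R : Type*) [Semiring R]

noncomputable def fibPoly : ℕ → R[X]
  | 0 => 1
  | 1 => 1
  | m + 2 => fibPoly (m + 1) + X * fibPoly m

variable {R}

theorem fibPoly_add_two (m : ℕ) : fibPoly R (m + 2) = fibPoly R (m + 1) + X * fibPoly R m :=
  rfl

theorem coeff_fibPoly : ∀ m k : ℕ, (fibPoly R m).coeff k = (m - k).choose k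
  | 0, k => by cases k <;> simp [fibPoly, coeff_one]
  | 1, k => by rcases k with _ | _ | k <;> simp [fibPoly, coeff_one]
  | m + 2, 0 => by simp [fibPoly_add_two, coeff_fibPoly (m + 1) 0]
  | m + 2, k + 1 => by
    rw [fibPoly_add_two, coeff_add, coeff_X_mul, coeff_fibPoly, coeff_fibPoly,
      show m + 2 - (k + 1) = m + 1 - k by omega, Nat.choose_succ_sub_succ,
      Nat.add_sub_add_right, Nat.cast_add]

end FibPoly

theorem coeff_torusGen (m k : ℕ) : (torusGen m).coeff k =
    (if k = 0 then 1 else 0) + (if k = 1 then (m : ℚ) + 2 else 0) +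
      if 2 ≤ k ∧ k ≤ m / 2 then (m : ℚ) / (m - k) * (m - k).choose k else 0 := by
  simp only [torusGen, coeff_add, coeff_one, coeff_C_mul_X, finsetSum_coeff, coeff_C_mul_X_pow,
    Finset.sum_ite_eq, Finset.mem_Icc]

theorem coeff_torusGen_add_two (m k : ℕ) :
    (torusGen m).coeff (k + 2) = m / (m - (k + 2 : ℕ)) * (m - (k + 2)).choose (k + 2) := by
  by_cases hk : k + 2 ≤ m / 2
  · simp [coeff_torusGen, hk]
  · simp [coeff_torusGen, hk, Nat.choose_eq_zero_of_lt (show m - (k + 2) < k + 2 by omega)]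

theorem torusGen_add_two_eq_fibPoly (m : ℕ) :
    torusGen (m + 2) = fibPoly ℚ (m + 2) + X * fibPoly ℚ m + 2 * X := by
  ext (_ | _ | k)
  · simp [coeff_torusGen, coeff_fibPoly]
  · norm_num [coeff_torusGen, coeff_fibPoly, add_assoc]
  · rw [coeff_torusGen_add_two]
    simp only [coeff_add, coeff_X_mul, coeff_fibPoly, coeff_ofNat_mul,
      coeff_X_of_ne_one (by omega : k + 2 ≠ 1), mul_zero, add_zero]
    rcases lt_or_ge k m with hkm | hmk
    · rw [cast_div_mul_choose_eq_choose_add_choose (by omega) (by omega),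
        show m + 2 - (k + 2) - 1 = m - (k + 1) by omega]
      rfl
    · simp [show m + 2 - (k + 2) = 0 by omega, show m - (k + 1) = 0 by omega]

/-- Proposition 6.3: for every `n ≥ 4`, the I-generating functions of the standard
`(2,m)`-torus link projections satisfy `f_n - f_{n-1} - X f_{n-2} = -2 X^2`. -/
theorem torusGen_recurrence (n : ℕ) (hn : 4 ≤ n) :
    torusGen n - torusGen (n - 1) - X * torusGen (n - 2) = -2 * X ^ 2 := by
  obtain ⟨m, rfl⟩ : ∃ m, n = m + 2 + 2 := ⟨n - 4, by omega⟩
  rw [show m + 2 + 2 - 1 = m + 1 + 2 by omega, show m + 2 + 2 - 2 = m + 2 by omega,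
    torusGen_add_two_eq_fibPoly, torusGen_add_two_eq_fibPoly, torusGen_add_two_eq_fibPoly,
    fibPoly_add_two (m + 2), fibPoly_add_two m]
  ring
end

section
/- (Corollary 6.4) For every n ≥ 4, the polynomials f_m ∈ ℚ[X] defined for m ≥ 2 by f_m = 1 + (m+2)·X + Σ_{k=2}^{⌊m/2⌋} (m/(m−k))·C(m−k, k)·X^k satisfy f_n(1) = f_{n−1}(1) + f_{n−2}(1) − 2, i.e., the total numbers of isolated-region sets of the standard (2,n)-torus link projections satisfy this Fibonacci-like recurrence. -/
open Polynomial

/-!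
The coefficient `m/(m-k) · C(m-k, k)` equals `C(m-k, k) + C(m-k-1, k-1)`, so `f_m(1) - 2` is the
Lucas number `L_m = F_{m+1} + F_{m-1}`, the two Fibonacci numbers being the shallow-diagonal
sums of Pascal's triangle. The recurrence is then the Fibonacci recurrence.
-/

open Finset

namespace Nat

theorem fib_succ_eq_sum_range_choose (n : ℕ) :
    fib (n + 1) = ∑ k ∈ range (n / 2 + 1), choose (n - k) k := by
  rw [fib_succ_eq_sum_choose, ← Nat.sum_antidiagonal_swap]
  simp only [Prod.fst_swap, Prod.snd_swap]
  rw [Nat.sum_antidiagonal_eq_sum_range_succ (fun i j => choose j i)]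
  refine (sum_subset (range_subset_range.2 (by omega)) fun k hk hk' => ?_).symm
  simp only [mem_range] at hk hk'
  exact choose_eq_zero_of_lt (by omega)

theorem add_mul_choose_eq (n : ℕ) {k : ℕ} (hk : 1 ≤ k) :
    (n + k) * choose n k = n * (choose n k + choose (n - 1) (k - 1)) := by
  obtain ⟨j, rfl⟩ : ∃ j, k = j + 1 := ⟨k - 1, by omega⟩
  cases n with
  | zero => simp
  | succ i =>
    rw [add_tsub_cancel_right, add_tsub_cancel_right, mul_add, add_one_mul_choose_eq]
    ring

theorem sum_Icc_two_choose_add_self {m : ℕ} (hm : 2 ≤ m) :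
    ∑ k ∈ Icc 2 (m / 2), choose (m - k) k + m = fib (m + 1) := by
  rw [fib_succ_eq_sum_range_choose, ← sum_range_add_sum_Ico _ (by omega : 2 ≤ m / 2 + 1),
    Ico_add_one_right_eq_Icc]
  simp only [sum_range_succ, range_one, sum_singleton, tsub_zero, choose_zero_right,
    choose_one_right]
  omega

theorem sum_Icc_two_choose_pred_add_one {m : ℕ} (hm : 2 ≤ m) :
    ∑ k ∈ Icc 2 (m / 2), choose (m - k - 1) (k - 1) + 1 = fib (m - 1) := by
  obtain ⟨n, rfl⟩ : ∃ n, m = n + 2 := ⟨m - 2, by omega⟩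
  rw [show n + 2 - 1 = n + 1 by omega, fib_succ_eq_sum_range_choose, sum_range_succ',
    show (n + 2) / 2 = n / 2 + 1 by omega, ← Ico_add_one_right_eq_Icc, sum_Ico_eq_sum_range,
    show n / 2 + 1 + 1 - 2 = n / 2 by omega, choose_zero_right]
  congr 1
  refine sum_congr rfl fun k _ => ?_
  rw [show n + 2 - (2 + k) - 1 = n - (k + 1) by omega, show 2 + k - 1 = k + 1 by omega]

end Nat

theorem torusGen_coeff_eq {m k : ℕ} (hk : 1 ≤ k) (hkm : k < m) :
    (m : ℚ) / ((m : ℚ) - (k : ℚ)) * (Nat.choose (m - k) k : ℚ) =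
      Nat.choose (m - k) k + Nat.choose (m - k - 1) (k - 1) := by
  obtain ⟨n, rfl⟩ : ∃ n, m = n + k := ⟨m - k, by omega⟩
  have hn : (n : ℚ) ≠ 0 := by exact_mod_cast (show n ≠ 0 by omega)
  rw [Nat.add_sub_cancel, Nat.cast_add, add_sub_cancel_right, div_mul_eq_mul_div,
    div_eq_iff hn, ← Nat.cast_add, ← Nat.cast_mul, Nat.add_mul_choose_eq n hk]
  push_cast
  ring

theorem torusGen_eval_one (m : ℕ) (hm : 2 ≤ m) :
    (torusGen m).eval 1 = Nat.fib (m - 1) + Nat.fib (m + 1) + 2 := by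
  have hsum : ∑ k ∈ Icc 2 (m / 2), (m : ℚ) / ((m : ℚ) - (k : ℚ)) * (Nat.choose (m - k) k : ℚ) =
      ∑ k ∈ Icc 2 (m / 2), ((Nat.choose (m - k) k : ℚ) + Nat.choose (m - k - 1) (k - 1)) :=
    sum_congr rfl fun k hk => torusGen_coeff_eq (by simp at hk; omega) (by simp at hk; omega)
  rw [← Nat.sum_Icc_two_choose_add_self hm, ← Nat.sum_Icc_two_choose_pred_add_one hm]
  simp only [torusGen, eval_add, eval_one, eval_mul, eval_C, eval_X, eval_finsetSum, eval_pow,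
    one_pow, mul_one, hsum, sum_add_distrib]
  push_cast
  ring

/-- Corollary 6.4: for every `n ≥ 4`, the total numbers of isolated-region sets of the
standard `(2,n)`-torus link projections satisfy the Fibonacci-like recurrence
`f_n(1) = f_{n-1}(1) + f_{n-2}(1) - 2`. -/
theorem torusGen_eval_one_recurrence (n : ℕ) (hn : 4 ≤ n) :
    (torusGen n).eval 1 = (torusGen (n - 1)).eval 1 + (torusGen (n - 2)).eval 1 - 2 := by
  obtain ⟨j, rfl⟩ : ∃ j, n = j + 4 := ⟨n - 4, by omega⟩
  rw [torusGen_eval_one _ (by omega), torusGen_eval_one _ (by omega),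
    torusGen_eval_one _ (by omega)]
  simp only [show j + 4 - 1 = j + 3 by omega, show j + 4 - 2 = j + 2 by omega,
    show j + 3 - 1 = j + 2 by omega, show j + 2 - 1 = j + 1 by omega, Nat.fib_add_two]
  push_cast
  ring
end
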